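/- arXiv:2307.05895 — 8 statements merged into one kernel-verified Lean document; each statement's English description precedes it below -/
import Mathlib

section
/- Let p be a prime with p ≡ 3 (mod 8) and set d = 4p. Then the 2-adic valuation of L(χ_d, −1) is exactly 1, i.e. v₂( (1/(2d)) · Σ_{a=1}^{d} χ_d(a) a² ) = 1. -/
/-!
Write `χ` for `χ_{4p}`. As `p ≡ 3 (mod 4)`, quadratic reciprocity gives `χ(a) = χ₄(a) (a/p)`,
hence `χ(a + 2p) = -χ(a)` and `χ(2p - a) = -χ(a)`. Pairing `a` with `a + 2p` and then `a`
with `2p - a` folds the sum into `∑_{a<4p} χ(a) a² = -8p W` with `W = ∑_{a<p} χ(a) (a - p)`,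
so the L-value is exactly `W`. Modulo `4` only the parity of `χ(a) = ±1` matters for odd
`a < p`, because `a - p` is even; so `W ≡ ∑_{a<p, a odd} (a - p) = -n(n+1)` with `p = 2n + 1`,
and `p ≡ 3 (mod 8)` makes this `≡ 2 (mod 4)`.
-/

open Finset NumberTheorySymbols ZMod

theorem sum_Icc_one_eq_sum_range {M : Type*} [AddCommMonoid M] {h : ℕ → M} {n : ℕ}
    (hn : h n = h 0) : ∑ a ∈ Icc 1 n, h a = ∑ a ∈ range n, h a := by
  rw [← Ico_add_one_right_eq_Icc, sum_Ico_eq_sum_range, add_tsub_cancel_right]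
  simp_rw [add_comm 1]
  cases n with
  | zero => rfl
  | succ n => rw [sum_range_succ, hn, sum_range_succ', add_comm]

theorem sum_range_two_mul_mul_sq_of_antiperiodic {R : Type*} [CommRing R] {f : ℕ → R} {N : ℕ}
    (hf : Function.Antiperiodic f N) :
    ∑ a ∈ range (2 * N), f a * (a : R) ^ 2 = -N * ∑ a ∈ range N, f a * (2 * a + N) := by
  rw [two_mul, sum_range_add, ← sum_add_distrib, mul_sum]
  refine sum_congr rfl fun a _ => ?_
  rw [add_comm N a, hf]
  push_cast
  ring

theorem sum_range_two_mul_add_eq_sum_reflect {M : Type*} [AddCommMonoid M] (g : ℕ → M)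
    (n : ℕ) :
    ∑ a ∈ range (2 * n), g a + g (2 * n) = ∑ a ∈ range n, (g a + g (2 * n - a)) + g n := by
  have upper :
      ∑ a ∈ range n, g (n + a) + g (n + n) = ∑ a ∈ range n, g (n + n - a) + g n := by
    have middle : g (n + n - n) = g n := by rw [Nat.add_sub_cancel]
    rw [← sum_range_succ (fun a => g (n + a)), ← sum_range_reflect _ (n + 1), ← middle,
      ← sum_range_succ (fun a => g (n + n - a))]
    refine sum_congr rfl fun a ha => ?_
    rw [mem_range] at ha
    congr 1
    omega
  rw [two_mul, sum_range_add, add_assoc, upper, sum_add_distrib, add_assoc]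

theorem sum_range_two_mul_ite_odd (n : ℕ) (c : ℤ) :
    ∑ a ∈ range (2 * n), (if Odd a then (a : ℤ) - c else 0) = n * (n - c) := by
  induction n with
  | zero => simp
  | succ n ih =>
    rw [mul_add_one, sum_range_succ, sum_range_succ, ih, if_neg (by simp), if_pos (by simp)]
    push_cast
    ring

theorem Int.mul_modEq_self_of_odd_of_even {u v : ℤ} (hu : Odd u) (hv : Even v) :
    u * v ≡ v [ZMOD 4] := by
  obtain ⟨s, rfl⟩ := hu
  obtain ⟨t, rfl⟩ := hv
  exact Int.modEq_iff_dvd.mpr ⟨-(s * t), by ring⟩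

theorem padicValInt_two_eq_one_of_modEq {z : ℤ} (h : z ≡ 2 [ZMOD 4]) : padicValInt 2 z = 1 := by
  obtain ⟨k, hk⟩ := Int.modEq_iff_dvd.mp h.symm
  have hz : z = 2 * (2 * k + 1) := by linarith
  rw [hz, padicValInt.mul two_ne_zero (by omega),
    padicValInt.eq_zero_of_not_dvd (show ¬ (2 : ℤ) ∣ 2 * k + 1 by omega), add_zero]
  simpa using padicValInt.self one_lt_two

theorem natCast_eq_three_of_mod_four {m : ℕ} (hm : m % 4 = 3) : (m : ZMod 4) = 3 := by
  rw [← ZMod.natCast_mod, hm]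
  rfl

/-- The character `χ_{4m}` (the Kronecker symbol `(4m/·)`) as a function on `ℕ`. -/
def quadChar (m a : ℕ) : ℤ := if Odd a then J(m | a) else 0

section quadChar

variable {m : ℕ}

theorem quadChar_of_even {a : ℕ} (ha : Even a) : quadChar m a = 0 :=
  if_neg (Nat.not_odd_iff_even.mpr ha)

theorem quadChar_eq_χ₄_mul_jacobiSym (hm : m % 4 = 3) (a : ℕ) :
    quadChar m a = χ₄ a * J(a | m) := by
  by_cases ha : Odd a
  · rw [quadChar, if_pos ha]
    rcases Nat.odd_mod_four_iff.mp (Nat.odd_iff.mp ha) with ha4 | ha4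
    · rw [jacobiSym.quadratic_reciprocity_one_mod_four ha4 (Nat.odd_iff.mpr (by omega)),
        χ₄_nat_one_mod_four ha4, one_mul]
    · rw [jacobiSym.quadratic_reciprocity_three_mod_four hm ha4, χ₄_nat_three_mod_four ha4,
        neg_one_mul]
  · rw [quadChar_of_even (Nat.not_odd_iff_even.mp ha), χ₄_nat_eq_if_mod_four,
      if_pos (by simpa [Nat.odd_iff] using ha), zero_mul]

theorem quadChar_antiperiodic (hm : m % 4 = 3) : Function.Antiperiodic (quadChar m) (2 * m) := by
  intro a
  have hχ₄ : χ₄ ((a + 2 * m : ℕ) : ZMod 4) = -χ₄ a := by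
    push_cast
    rw [natCast_eq_three_of_mod_four hm]
    generalize (a : ZMod 4) = x
    revert x
    decide
  have hJ : J(((a + 2 * m : ℕ) : ℤ) | m) = J(a | m) :=
    jacobiSym.mod_left' (by push_cast; rw [mul_comm, Int.add_mul_emod_self_left])
  rw [quadChar_eq_χ₄_mul_jacobiSym hm, quadChar_eq_χ₄_mul_jacobiSym hm, hχ₄, hJ, neg_mul]

theorem quadChar_two_mul_sub (hm : m % 4 = 3) {a : ℕ} (ha : a ≤ 2 * m) :
    quadChar m (2 * m - a) = -quadChar m a := by
  have hχ₄ : χ₄ ((2 * m - a : ℕ) : ZMod 4) = χ₄ a := by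
    rw [Nat.cast_sub ha]
    push_cast
    rw [natCast_eq_three_of_mod_four hm]
    generalize (a : ZMod 4) = x
    revert x
    decide
  have hJ : J(((2 * m - a : ℕ) : ℤ) | m) = -J(a | m) := by
    have hmod : ((2 * m - a : ℕ) : ℤ) % m = -(a : ℤ) % m := by
      push_cast [Nat.cast_sub ha]
      rw [mul_comm, sub_eq_neg_add, Int.add_mul_emod_self_left]
    rw [jacobiSym.mod_left' hmod, jacobiSym.neg _ (Nat.odd_iff.mpr (by omega)),
      χ₄_nat_three_mod_four hm, neg_one_mul]
  rw [quadChar_eq_χ₄_mul_jacobiSym hm, quadChar_eq_χ₄_mul_jacobiSym hm, hχ₄, hJ, mul_neg]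

theorem quadChar_self (hm : m % 4 = 3) : quadChar m m = 0 := by
  have h := quadChar_two_mul_sub hm (a := m) (by omega)
  rw [two_mul, Nat.add_sub_cancel] at h
  omega

theorem sum_range_four_mul_quadChar_mul_sq (hm : m % 4 = 3) :
    ∑ a ∈ range (4 * m), quadChar m a * (a : ℤ) ^ 2
      = -8 * m * ∑ a ∈ range m, quadChar m a * ((a : ℤ) - m) := by
  have fold := sum_range_two_mul_add_eq_sum_reflect
    (fun a => quadChar m a * (2 * (a : ℤ) + 2 * m)) m
  simp only [quadChar_of_even (even_two_mul m), quadChar_self hm, zero_mul, add_zero] at fold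
  have pair : ∀ a ∈ range m, quadChar m a * (2 * (a : ℤ) + 2 * m)
      + quadChar m (2 * m - a) * (2 * ((2 * m - a : ℕ) : ℤ) + 2 * m)
      = 4 * (quadChar m a * ((a : ℤ) - m)) := by
    intro a ha
    rw [mem_range] at ha
    rw [quadChar_two_mul_sub hm (by omega), Nat.cast_sub (by omega)]
    push_cast
    ring
  rw [show 4 * m = 2 * (2 * m) by ring,
    sum_range_two_mul_mul_sq_of_antiperiodic (quadChar_antiperiodic hm)]
  push_cast
  rw [fold, sum_congr rfl pair, ← mul_sum]
  ring

end quadChar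

theorem odd_quadChar_of_lt {p a : ℕ} (hp : p.Prime) (ha : Odd a) (hap : a < p) :
    Odd (quadChar p a) := by
  have hcop : Nat.Coprime p a := Nat.coprime_of_lt_prime (by rintro rfl; simp at ha) hap hp
  rw [quadChar, if_pos ha]
  rcases jacobiSym.eq_one_or_neg_one (a := p) (b := a)
      (by simpa [Int.gcd_natCast_natCast] using hcop) with h | h
  · rw [h]; exact odd_one
  · rw [h]; exact odd_neg_one

theorem sum_range_quadChar_mul_sub_modEq {p : ℕ} (hp : p.Prime) (hp8 : p % 8 = 3) :
    ∑ a ∈ range p, quadChar p a * ((a : ℤ) - p) ≡ 2 [ZMOD 4] := by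
  have hterm : ∀ a ∈ range p,
      quadChar p a * ((a : ℤ) - p) ≡ if Odd a then (a : ℤ) - p else 0 [ZMOD 4] := by
    intro a ha
    by_cases hodd : Odd a
    · rw [if_pos hodd]
      exact Int.mul_modEq_self_of_odd_of_even (odd_quadChar_of_lt hp hodd (mem_range.mp ha))
        ((hodd.natCast (R := ℤ)).sub_odd ((hp.odd_of_ne_two (by omega)).natCast))
    · simp [quadChar, hodd]
  obtain ⟨k, hk⟩ : ∃ k, p = 2 * (4 * k + 1) + 1 := ⟨p / 8, by omega⟩
  calc _ ≡ ∑ a ∈ range p, if Odd a then (a : ℤ) - p else 0 [ZMOD 4] := Int.ModEq.sum hterm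
    _ = 4 * (-(4 * k ^ 2 + 3 * k + 1)) + 2 := by
      rw [hk, sum_range_succ, sum_range_two_mul_ite_odd, if_neg (by simp)]
      push_cast
      ring
    _ ≡ 2 [ZMOD 4] := by simp [Int.ModEq]

/-- For a prime `p ≡ 3 (mod 8)` and `d = 4p`, the 2-adic valuation of
`L(χ_d, -1) = -(1/(2d)) ∑_{a=1}^{d} χ_d(a) a²` is exactly `1`, where `χ_d(a)` is the
Jacobi symbol `(p/a)` for odd `a` and `0` for even `a`. -/
theorem stmt3 (p : ℕ) (hp : p.Prime) (hmod : p % 8 = 3) :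
    padicValRat 2 ((1 / (2 * ((4 * p : ℕ) : ℚ))) *
      ∑ a ∈ Finset.Icc 1 (4 * p),
        (if Odd a then ((jacobiSym p a : ℤ) : ℚ) else 0) * (a : ℚ) ^ 2) = 1 := by
  have hsum : ∑ a ∈ Icc 1 (4 * p),
      (if Odd a then ((jacobiSym p a : ℤ) : ℚ) else 0) * (a : ℚ) ^ 2
        = ((∑ a ∈ range (4 * p), quadChar p a * (a : ℤ) ^ 2 : ℤ) : ℚ) := by
    have h4p : Even (4 * p) := ⟨2 * p, by ring⟩
    rw [Int.cast_sum, ← sum_Icc_one_eq_sum_range (by simp [quadChar_of_even h4p])]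
    refine sum_congr rfl fun a _ => ?_
    simp only [quadChar]
    split_ifs <;> push_cast <;> ring
  rw [hsum, sum_range_four_mul_quadChar_mul_sq (by omega)]
  set W := ∑ a ∈ range p, quadChar p a * ((a : ℤ) - p)
  have hp0 : (p : ℚ) ≠ 0 := by exact_mod_cast hp.ne_zero
  have hval : 1 / (2 * ((4 * p : ℕ) : ℚ)) * ((-8 * p * W : ℤ) : ℚ) = ((-W : ℤ) : ℚ) := by
    push_cast
    field_simp
    ring
  rw [hval, padicValRat.of_int, padicValInt_two_eq_one_of_modEq, Nat.cast_one]
  exact (sum_range_quadChar_mul_sub_modEq hp hmod).neg.trans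
    (by decide : (-2 : ℤ) ≡ 2 [ZMOD 4])
end

section
/- Let p be a prime with p ≡ 3 (mod 8). Then Σ_{c=1}^{p} (p/(4c−1)) · c² ≡ 1 (mod 2), where (p/(4c−1)) denotes the Jacobi symbol with numerator p and odd positive denominator 4c−1. -/
/-!
Reduced mod 2, a Jacobi symbol is `1` when its arguments are coprime and `0` otherwise, and
`c² ≡ c`. Among `c ∈ [1, p]` the only `4c - 1` divisible by `p` is `4c - 1 = p`, because
`3p + 1 ≡ 2 (mod 4)`. So the sum is `∑ c - (p + 1)/4 (mod 2)`, where `∑_{c=1}^{p} c = p(p+1)/2`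
is even as `4 ∣ p + 1`, and `(p + 1)/4` is odd as `p + 1 ≡ 4 (mod 8)`.
-/

open Finset

theorem jacobiSym_cast_zmod_two (a : ℤ) (b : ℕ) [NeZero b] :
    ((jacobiSym a b : ℤ) : ZMod 2) = if a.gcd b = 1 then 1 else 0 := by
  split_ifs with h
  · rcases jacobiSym.eq_one_or_neg_one h with h1 | h1 <;> rw [h1] <;> decide
  · rw [jacobiSym.eq_zero_iff_not_coprime.mpr h, Int.cast_zero]

theorem sum_Icc_one_id_mul_two (n : ℕ) : (∑ c ∈ Icc 1 n, c) * 2 = n * (n + 1) := by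
  induction n with
  | zero => rfl
  | succ n ih => rw [sum_Icc_succ_top (by omega), add_mul, ih]; ring

theorem dvd_four_mul_sub_one_iff {p c : ℕ} (hp : p % 4 = 3) (hc : c ∈ Icc 1 p) :
    p ∣ 4 * c - 1 ↔ c = (p + 1) / 4 := by
  rw [mem_Icc] at hc
  constructor
  · rintro ⟨k, hk⟩
    have hk4 : k < 4 := by
      by_contra! hk4
      have := Nat.mul_le_mul_left p hk4
      omega
    interval_cases k <;> omega
  · intro h
    exact ⟨1, by omega⟩

theorem jacobiSym_four_mul_sub_one_mul_sq_zmod_two {p c : ℕ} (hp : p.Prime) (hmod : p % 8 = 3)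
    (hc : c ∈ Icc 1 p) :
    ((jacobiSym p (4 * c - 1) * (c : ℤ) ^ 2 : ℤ) : ZMod 2) =
      c - if c = (p + 1) / 4 then 1 else 0 := by
  have : NeZero (4 * c - 1) := ⟨by rw [mem_Icc] at hc; omega⟩
  have hcop : Int.gcd p (4 * c - 1 : ℕ) = 1 ↔ c ≠ (p + 1) / 4 := by
    rw [Int.gcd_natCast_natCast, ← Nat.Coprime, hp.coprime_iff_not_dvd,
      dvd_four_mul_sub_one_iff (by omega) hc]
  rw [Int.cast_mul, jacobiSym_cast_zmod_two, Int.cast_pow, Int.cast_natCast, ZMod.pow_card]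
  by_cases h : c = (p + 1) / 4
  · have hc_odd : (c : ZMod 2) = 1 := by
      rw [ZMod.natCast_eq_one_iff_odd, Nat.odd_iff]; omega
    rw [if_neg fun hA => hcop.mp hA h, if_pos h, hc_odd]
    decide
  · rw [if_pos (hcop.mpr h), if_neg h]
    ring

/-- For a prime `p ≡ 3 (mod 8)`, `∑_{c=1}^{p} (p/(4c-1)) c² ≡ 1 (mod 2)`, where `(p/(4c-1))`
is the Jacobi symbol with numerator `p` and odd positive denominator `4c - 1`. -/
theorem stmt4 (p : ℕ) (hp : p.Prime) (hmod : p % 8 = 3) :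
    (∑ c ∈ Finset.Icc 1 p, jacobiSym p (4 * c - 1) * (c : ℤ) ^ 2) ≡ 1 [ZMOD 2] := by
  have hsum : (∑ c ∈ Icc 1 p, (c : ZMod 2)) = 0 := by
    rw [← Nat.cast_sum, ZMod.natCast_eq_zero_iff]
    have := sum_Icc_one_id_mul_two p
    obtain ⟨t, ht⟩ : ∃ t, p + 1 = 4 * t := ⟨(p + 1) / 4, by omega⟩
    exact ⟨t * p, by rw [ht] at this; linarith⟩
  have hc₀ : (p + 1) / 4 ∈ Icc 1 p := mem_Icc.mpr ⟨by omega, by omega⟩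
  refine (ZMod.intCast_eq_intCast_iff _ 1 2).mp ?_
  rw [Int.cast_sum,
    sum_congr rfl fun c hc => jacobiSym_four_mul_sub_one_mul_sq_zmod_two hp hmod hc,
    sum_sub_distrib, hsum, sum_ite_eq', if_pos hc₀]
  decide
end

section
/- Let p₁, …, p_n be distinct primes with p_i ≡ 5 (mod 8) for all i, set D = p₁⋯p_n, and let 𝒢 = { a ∈ ℤ : 1 ≤ a ≤ D and the Legendre symbol (a/p_i) = 1 for all 1 ≤ i ≤ n }. Then there exists an odd integer t such that Σ_{a ∈ 𝒢} a² ≡ 2^{n−1}·t (mod 4). In particular, if n ≥ 3 then 4 divides Σ_{a ∈ 𝒢} a². -/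
open Finset

lemma aux_card_qr (p : ℕ) [Fact p.Prime] (hp2 : p ≠ 2) :
    (Finset.univ.filter (fun x : ZMod p => quadraticChar (ZMod p) x = 1)).card = (p - 1) / 2 := by
  have hchar : ringChar (ZMod p) ≠ 2 := by
    rw [ZMod.ringChar_zmod_n]; exact hp2
  set A := Finset.univ.filter (fun x : ZMod p => quadraticChar (ZMod p) x = 1) with hA
  set B := Finset.univ.filter (fun x : ZMod p => quadraticChar (ZMod p) x = -1) with hB
  have hsum := quadraticChar_sum_zero hchar
  have hdisj : Disjoint A B := by
    rw [Finset.disjoint_filter]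
    intro x _ h1 h2
    rw [h1] at h2; norm_num at h2
  have hunion : A ∪ B = Finset.univ.filter (fun x : ZMod p => x ≠ 0) := by
    ext x
    simp only [hA, hB, Finset.mem_union, Finset.mem_filter, Finset.mem_univ, true_and]
    constructor
    · rintro (h | h) rfl <;> simp [quadraticChar_zero] at h
    · intro hx; exact quadraticChar_dichotomy hx
  have hcardU : (A ∪ B).card = p - 1 := by
    rw [hunion, Finset.filter_ne', Finset.card_erase_of_mem (Finset.mem_univ _),
      Finset.card_univ, ZMod.card]
  have hcards : A.card + B.card = p - 1 := by
    rw [← Finset.card_union_of_disjoint hdisj, hcardU]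
  have hAB : (A.card : ℤ) = B.card := by
    have h0 : ∑ x ∈ A ∪ B, quadraticChar (ZMod p) x
        = ∑ x : ZMod p, quadraticChar (ZMod p) x := by
      rw [hunion]
      exact Finset.sum_filter_of_ne (fun x _ h hx0 => h (by simp [hx0]))
    have h1 : ∑ x ∈ A, quadraticChar (ZMod p) x = (A.card : ℤ) := by
      rw [Finset.sum_congr rfl (fun x hx => (Finset.mem_filter.mp hx).2), Finset.sum_const,
        nsmul_eq_mul, mul_one]
    have h2 : ∑ x ∈ B, quadraticChar (ZMod p) x = -(B.card : ℤ) := by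
      rw [Finset.sum_congr rfl (fun x hx => (Finset.mem_filter.mp hx).2), Finset.sum_const,
        nsmul_eq_mul, mul_neg_one]
    have := Finset.sum_union hdisj (f := fun x => quadraticChar (ZMod p) x)
    rw [h0, hsum, h1, h2] at this
    linarith
  have : A.card = B.card := by exact_mod_cast hAB
  omega

lemma aux_card_G (n : ℕ) (p : Fin n → ℕ) (hp : ∀ i, (p i).Prime)
    (hp2 : ∀ i, p i ≠ 2) (hinj : Function.Injective p) :
    ((Finset.Icc 1 (∏ i, p i)).filter
        (fun a : ℕ => ∀ i, jacobiSym (a : ℤ) (p i) = 1)).card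
      = ∏ i, (p i - 1) / 2 := by
  classical
  haveI : ∀ i, Fact (p i).Prime := fun i => ⟨hp i⟩
  set D := ∏ i, p i with hD
  have hDpos : 0 < D := Finset.prod_pos (fun i _ => (hp i).pos)
  set Φ : ℕ → ∀ i, ZMod (p i) := fun a i => (a : ZMod (p i)) with hΦ
  set P : (∀ i, ZMod (p i)) → Prop :=
    fun f => ∀ i, quadraticChar (ZMod (p i)) (f i) = 1 with hP
  -- condition translation
  have hcond : ∀ a : ℕ, (∀ i, jacobiSym (a : ℤ) (p i) = 1) ↔ P (Φ a) := by
    intro a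
    apply forall_congr'
    intro i
    rw [← jacobiSym.legendreSym.to_jacobiSym]
    unfold legendreSym
    norm_cast
  -- injectivity on Icc
  have hinjOn : Set.InjOn Φ (Finset.Icc 1 D : Set ℕ) := by
    intro a ha b hb hab
    simp only [Finset.coe_Icc, Set.mem_Icc] at ha hb
    have hdvd : ∀ i, (p i : ℤ) ∣ ((b : ℤ) - a) := by
      intro i
      have h1 : (a : ZMod (p i)) = (b : ZMod (p i)) := congrFun hab i
      exact ((ZMod.natCast_eq_natCast_iff a b (p i)).mp h1).dvd
    have hprod : (D : ℤ) ∣ ((b : ℤ) - a) := by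
      have : (∏ i, (p i : ℤ)) ∣ ((b : ℤ) - a) := by
        apply Finset.prod_dvd_of_coprime
        · intro i _ j _ hij
          have hco : Nat.Coprime (p i) (p j) :=
            (Nat.coprime_primes (hp i) (hp j)).mpr (fun h => hij (hinj h))
          exact Nat.isCoprime_iff_coprime.mpr hco
        · intro i _; exact hdvd i
      rwa [← Nat.cast_prod] at this
    have habs : |(b : ℤ) - a| < D := by
      rw [abs_sub_lt_iff]
      constructor <;> [skip; skip] <;> omega
    have := Int.eq_zero_of_abs_lt_dvd hprod habs
    omega
  -- image is univ
  have hcards : Fintype.card (∀ i, ZMod (p i)) = D := by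
    rw [Fintype.card_pi]
    exact Finset.prod_congr rfl (fun i _ => ZMod.card (p i))
  have himg : (Finset.Icc 1 D).image Φ = Finset.univ := by
    apply Finset.eq_univ_of_card
    rw [Finset.card_image_of_injOn hinjOn, Nat.card_Icc, hcards]
    omega
  -- transfer the count
  have hfilt : (Finset.Icc 1 D).filter (fun a : ℕ => ∀ i, jacobiSym (a : ℤ) (p i) = 1)
      = (Finset.Icc 1 D).filter (fun a => P (Φ a)) := by
    apply Finset.filter_congr
    intro a _; simpa using hcond a
  rw [hfilt]
  have : ((Finset.Icc 1 D).filter (fun a => P (Φ a))).card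
      = (Finset.univ.filter P).card := by
    rw [← himg, Finset.filter_image]
    rw [Finset.card_image_of_injOn
      (hinjOn.mono (by intro x hx; simpa using (Finset.mem_filter.mp hx).1))]
  rw [this]
  -- now product count
  have hsub : (Finset.univ.filter P).card = Fintype.card {f : ∀ i, ZMod (p i) // P f} := by
    rw [Fintype.card_subtype]
  rw [hsub]
  have hequiv : {f : ∀ i, ZMod (p i) // ∀ i, quadraticChar (ZMod (p i)) (f i) = 1}
      ≃ ∀ i, {x : ZMod (p i) // quadraticChar (ZMod (p i)) x = 1} :=
    Equiv.subtypePiEquivPi (p := fun i x => quadraticChar (ZMod (p i)) x = 1)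
  have hc2 : Fintype.card {f : ∀ i, ZMod (p i) // P f}
      = Fintype.card (∀ i, {x : ZMod (p i) // quadraticChar (ZMod (p i)) x = 1}) :=
    Fintype.card_congr hequiv
  rw [hc2, Fintype.card_pi]
  apply Finset.prod_congr rfl
  intro i _
  rw [Fintype.card_subtype]
  exact aux_card_qr (p i) (hp2 i)

lemma aux_flip (n : ℕ) (hn : 0 < n) (p : Fin n → ℕ) (hp : ∀ i, (p i).Prime)
    (hmod : ∀ i, p i % 8 = 5) :
    ∀ a ∈ (Finset.Icc 1 (∏ i, p i)).filter
        (fun a : ℕ => ∀ i, jacobiSym (a : ℤ) (p i) = 1),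
      a < ∏ i, p i ∧
      ((∏ i, p i) - a) ∈ (Finset.Icc 1 (∏ i, p i)).filter
        (fun a : ℕ => ∀ i, jacobiSym (a : ℤ) (p i) = 1) := by
  intro a ha
  haveI : ∀ i, Fact (p i).Prime := fun i => ⟨hp i⟩
  set D := ∏ i, p i with hD
  obtain ⟨haIcc, hj⟩ := Finset.mem_filter.mp ha
  obtain ⟨ha1, ha2⟩ := Finset.mem_Icc.mp haIcc
  have hdvd : ∀ i, (p i : ℤ) ∣ (D : ℤ) := by
    intro i
    exact_mod_cast Int.natCast_dvd_natCast.mpr (Finset.dvd_prod_of_mem p (Finset.mem_univ i))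
  have hlt : a < D := by
    rcases lt_or_eq_of_le ha2 with h | h
    · exact h
    · exfalso
      set i0 : Fin n := ⟨0, hn⟩
      have h0 : jacobiSym (a : ℤ) (p i0) = 0 := by
        rw [h]
        have hmodz : ((D : ℤ)) % (p i0) = (0 : ℤ) % (p i0) := by
          rw [Int.zero_emod]
          exact Int.emod_eq_zero_of_dvd (hdvd i0)
        rw [jacobiSym.mod_left' hmodz]
        exact jacobiSym.zero_left (hp i0).one_lt
      rw [hj i0] at h0
      norm_num at h0
  refine ⟨hlt, Finset.mem_filter.mpr ⟨Finset.mem_Icc.mpr ⟨by omega, by omega⟩, ?_⟩⟩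
  intro i
  have hcast : (((D - a : ℕ)) : ℤ) = (D : ℤ) - a := by
    push_cast [Nat.cast_sub ha2]; ring
  rw [hcast]
  have hmodz : ((D : ℤ) - a) % (p i) = (-(a : ℤ)) % (p i) := by
    have : (D : ℤ) - a ≡ 0 - a [ZMOD (p i)] :=
      Int.ModEq.sub_right a ((Int.modEq_zero_iff_dvd).mpr (hdvd i))
    rw [zero_sub] at this; exact this
  rw [jacobiSym.mod_left' hmodz, show (-(a : ℤ)) = -1 * a by ring, jacobiSym.mul_left,
    jacobiSym.at_neg_one (Nat.odd_iff.mpr (by have := hmod i; omega)),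
    ZMod.χ₄_nat_one_mod_four (by have := hmod i; omega), hj i, one_mul]



/-- For distinct primes `p 1, …, p n` all `≡ 5 (mod 8)`, `D = p 1 ⋯ p n`, and
`𝒢 = { 1 ≤ a ≤ D : (a/p i) = 1 for all i }`, there is an odd integer `t` with
`∑_{a ∈ 𝒢} a² ≡ 2^{n-1} t (mod 4)`; in particular `4 ∣ ∑_{a ∈ 𝒢} a²` once `n ≥ 3`. -/
theorem stmt9 (n : ℕ) (hn : 0 < n) (p : Fin n → ℕ) (hp : ∀ i, (p i).Prime)
    (hmod : ∀ i, p i % 8 = 5) (hinj : Function.Injective p) :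
    (∃ t : ℤ, Odd t ∧
      (∑ a ∈ (Finset.Icc 1 (∏ i, p i)).filter (fun a : ℕ => ∀ i, jacobiSym (a : ℤ) (p i) = 1),
          (a : ℤ) ^ 2) ≡ 2 ^ (n - 1) * t [ZMOD 4]) ∧
    (3 ≤ n →
      (4 : ℤ) ∣ ∑ a ∈ (Finset.Icc 1 (∏ i, p i)).filter (fun a : ℕ => ∀ i, jacobiSym (a : ℤ) (p i) = 1),
          (a : ℤ) ^ 2) := by
  classical
  set D := ∏ i, p i with hD
  set G := (Finset.Icc 1 D).filter (fun a : ℕ => ∀ i, jacobiSym (a : ℤ) (p i) = 1) with hG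
  set S := ∑ a ∈ G, (a : ℤ) ^ 2 with hS
  -- D is odd
  have hDodd : D % 2 = 1 := by
    rw [← Nat.odd_iff]
    rw [hD]
    apply Finset.prod_induction p Odd (fun a b ha hb => ha.mul hb) odd_one
    intro i _
    exact Nat.odd_iff.mpr (by have := hmod i; omega)
  have hflip := aux_flip n hn p hp hmod
  -- the two parity halves of G have equal size
  have hGodd : (G.filter (fun a => a % 2 = 1)).card
      = (G.filter (fun a => ¬ a % 2 = 1)).card := by
    apply Finset.card_bij' (i := fun a _ => D - a) (j := fun a _ => D - a)
    · intro a ha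
      obtain ⟨haG, hap⟩ := Finset.mem_filter.mp ha
      obtain ⟨hlt, hmem⟩ := hflip a haG
      have h1 := (Finset.mem_Icc.mp (Finset.mem_filter.mp haG).1).1
      exact Finset.mem_filter.mpr ⟨hmem, by omega⟩
    · intro a ha
      obtain ⟨haG, hap⟩ := Finset.mem_filter.mp ha
      obtain ⟨hlt, hmem⟩ := hflip a haG
      have h1 := (Finset.mem_Icc.mp (Finset.mem_filter.mp haG).1).1
      exact Finset.mem_filter.mpr ⟨hmem, by omega⟩
    · intro a ha
      obtain ⟨haG, _⟩ := Finset.mem_filter.mp ha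
      have h2 := (Finset.mem_Icc.mp (Finset.mem_filter.mp haG).1).2
      omega
    · intro a ha
      obtain ⟨haG, _⟩ := Finset.mem_filter.mp ha
      have h2 := (Finset.mem_Icc.mp (Finset.mem_filter.mp haG).1).2
      omega
  have hsplit : (G.filter (fun a => a % 2 = 1)).card
      + (G.filter (fun a => ¬ a % 2 = 1)).card = G.card :=
    Finset.card_filter_add_card_filter_not _
  -- counting
  have hp2 : ∀ i, p i ≠ 2 := fun i h => by have := hmod i; omega
  have hcount : G.card = ∏ i, (p i - 1) / 2 := aux_card_G n p hp hp2 hinj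
  -- factor structure
  set q : Fin n → ℕ := fun i => (p i - 1) / 4 with hq
  have hqprop : ∀ i, q i % 2 = 1 ∧ (p i - 1) / 2 = 2 * q i := by
    intro i; have := hmod i
    constructor <;> simp only [hq] <;> omega
  have hprodq : ∏ i, (p i - 1) / 2 = 2 ^ n * ∏ i, q i := by
    rw [Finset.prod_congr rfl (fun i _ => (hqprop i).2), Finset.prod_mul_distrib,
      Finset.prod_const, Finset.card_univ, Fintype.card_fin]
  set T := ∏ i, q i with hT
  have hTodd : T % 2 = 1 := by
    rw [← Nat.odd_iff, hT]
    apply Finset.prod_induction q Odd (fun a b ha hb => ha.mul hb) odd_one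
    intro i _; exact Nat.odd_iff.mpr (hqprop i).1
  -- card of odd part
  have hOddcard : (G.filter (fun a => a % 2 = 1)).card = 2 ^ (n - 1) * T := by
    have h2 : 2 * (G.filter (fun a => a % 2 = 1)).card = 2 * (2 ^ (n - 1) * T) := by
      have hpow : 2 ^ n = 2 * 2 ^ (n - 1) := by
        conv_lhs => rw [show n = (n - 1) + 1 by omega]
        rw [pow_succ]; ring
      rw [show 2 * (G.filter (fun a => a % 2 = 1)).card
          = (G.filter (fun a => a % 2 = 1)).card
            + (G.filter (fun a => ¬ a % 2 = 1)).card by omega,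
        hsplit, hcount, hprodq, hpow]
      ring
    omega
  -- the sum mod 4
  have hmain : (S : ZMod 4) = ((2 ^ (n - 1) * T : ℕ) : ZMod 4) := by
    rw [hS]
    push_cast
    rw [← Finset.sum_filter_add_sum_filter_not G (fun a => a % 2 = 1)]
    have hodd : ∑ a ∈ G.filter (fun a => a % 2 = 1), ((a : ZMod 4)) ^ 2
        = ((G.filter (fun a => a % 2 = 1)).card : ZMod 4) := by
      rw [Finset.sum_congr rfl (fun a ha => ?_), Finset.sum_const, nsmul_eq_mul, mul_one]
      have hap := (Finset.mem_filter.mp ha).2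
      have h4 : a % 4 = 1 ∨ a % 4 = 3 := by omega
      rw [show ((a : ZMod 4)) = ((a % 4 : ℕ) : ZMod 4) from (ZMod.natCast_mod a 4).symm]
      rcases h4 with h | h <;> rw [h] <;> decide
    have heven : ∑ a ∈ G.filter (fun a => ¬ a % 2 = 1), ((a : ZMod 4)) ^ 2 = 0 := by
      rw [Finset.sum_congr rfl (fun a ha => ?_), Finset.sum_const, smul_zero]
      have hap := (Finset.mem_filter.mp ha).2
      have h4 : a % 4 = 0 ∨ a % 4 = 2 := by omega
      rw [show ((a : ZMod 4)) = ((a % 4 : ℕ) : ZMod 4) from (ZMod.natCast_mod a 4).symm]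
      rcases h4 with h | h <;> rw [h] <;> decide
    rw [hodd, heven, add_zero, hOddcard]
    push_cast
    ring
  have hmod4 : S ≡ 2 ^ (n - 1) * (T : ℤ) [ZMOD 4] := by
    have := (ZMod.intCast_eq_intCast_iff S (2 ^ (n - 1) * (T : ℤ)) 4).mp ?_
    · exact this
    · rw [hmain]; push_cast; ring
  constructor
  · exact ⟨(T : ℤ), Int.odd_coe_nat T |>.mpr (Nat.odd_iff.mpr hTodd), hmod4⟩
  · intro h3
    have hdvd4 : (4 : ℤ) ∣ 2 ^ (n - 1) * (T : ℤ) := by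
      apply dvd_mul_of_dvd_left
      have : (4 : ℤ) = 2 ^ 2 := by norm_num
      rw [this]
      exact pow_dvd_pow 2 (by omega)
    have := hmod4.trans ((Int.modEq_zero_iff_dvd).mpr hdvd4)
    exact (Int.modEq_zero_iff_dvd).mp this
end

section
/- Let p₁, …, p_n be distinct primes with p₁ ≡ 3 (mod 8) and p_i ≡ 5 (mod 8) for 2 ≤ i ≤ n, and set D = 4p₁p₂⋯p_n. Let 𝒢 = { a ∈ ℤ : 1 ≤ a ≤ D, a odd, the Jacobi symbol (p₁/a) = 1, and the Legendre symbol (a/p_i) = 1 for all 2 ≤ i ≤ n }. Then there exists an odd integer y such that Σ_{a ∈ 𝒢} a² ≡ 2^n · y (mod 16); more precisely, Σ_{a ∈ 𝒢} a² ≡ 10 · ∏_{i=1}^{n} ((p_i − 1)/2) (mod 16). In particular, if n ≥ 4 then 16 divides Σ_{a ∈ 𝒢} a². -/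
open Finset

lemma aux2sq (a : ℕ) (ha : Odd a) : (2 : ZMod 16) * ((a : ZMod 16))^2 = 2 := by
  obtain ⟨t, rfl⟩ := ha
  obtain ⟨s, hs⟩ := Nat.even_mul_succ_self t
  have h16 : (16 : ZMod 16) = 0 := by decide
  have hs' : (t : ZMod 16) * (t+1) = 2 * s := by
    have h : (t * (t+1) : ℕ) = 2 * s := by omega
    calc (t : ZMod 16) * (t+1) = ((t * (t+1) : ℕ) : ZMod 16) := by push_cast; ring
    _ = ((2 * s : ℕ) : ZMod 16) := by rw [h]
    _ = 2 * s := by push_cast; ring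
  push_cast
  linear_combination 8 * hs' + (s : ZMod 16) * h16

lemma aux8 (k : ℕ) (hk : Odd k) : (8 : ZMod 16) * (k : ZMod 16) = 8 := by
  obtain ⟨t, rfl⟩ := hk
  have h16 : (16 : ZMod 16) = 0 := by decide
  push_cast
  linear_combination (t : ZMod 16) * h16

lemma auxcount (q : ℕ) [Fact q.Prime] (hq2 : q % 2 = 1) (e : ℤ) (he : e = 1 ∨ e = -1) :
    (Finset.univ.filter fun x : ZMod q => quadraticChar (ZMod q) x = e).card = (q - 1) / 2 := by
  have hq : q ≠ 2 := by omega
  haveI : NeZero q := ⟨(Fact.out : q.Prime).pos.ne'⟩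
  have hchar : ringChar (ZMod q) ≠ 2 := by
    rw [ZMod.ringChar_zmod_n]; exact hq
  set A := Finset.univ.filter fun x : ZMod q => quadraticChar (ZMod q) x = 1 with hA
  set B := Finset.univ.filter fun x : ZMod q => quadraticChar (ZMod q) x = -1 with hB
  have hdisj : Disjoint A B := by
    rw [Finset.disjoint_filter]
    intro x _ h1 h2
    rw [h1] at h2; norm_num at h2
  have hunion : A ∪ B = Finset.univ.filter fun x : ZMod q => x ≠ 0 := by
    ext x
    simp only [hA, hB, Finset.mem_union, Finset.mem_filter, Finset.mem_univ, true_and]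
    constructor
    · rintro (h | h) rfl <;> simp [quadraticChar_zero] at h
    · intro hx; exact quadraticChar_dichotomy hx
  have hcardU : (A ∪ B).card = q - 1 := by
    rw [hunion]
    have : (Finset.univ.filter fun x : ZMod q => x ≠ 0) = Finset.univ.erase 0 := by
      ext x; simp [Finset.mem_erase, and_comm]
    rw [this, Finset.card_erase_of_mem (Finset.mem_univ _), Finset.card_univ, ZMod.card]
  have hsum : (A.card : ℤ) - B.card = 0 := by
    have h0 := quadraticChar_sum_zero hchar
    have h1 : ∑ x : ZMod q, quadraticChar (ZMod q) x
        = ∑ x ∈ A ∪ B, quadraticChar (ZMod q) x := by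
      refine (Finset.sum_subset (Finset.subset_univ _) ?_).symm
      intro x _ hx
      rw [hunion] at hx
      simp only [Finset.mem_filter, Finset.mem_univ, true_and, not_not] at hx
      simp [hx, quadraticChar_zero]
    rw [h1, Finset.sum_union hdisj] at h0
    rw [Finset.sum_congr rfl (fun x hx => (Finset.mem_filter.mp hx).2),
        Finset.sum_congr rfl (fun x (hx : x ∈ B) => (Finset.mem_filter.mp hx).2)] at h0
    simp only [Finset.sum_const, nsmul_eq_mul, mul_one, mul_neg_one] at h0
    linarith [h0]
  have hcard : A.card + B.card = q - 1 := by
    rw [← Finset.card_union_of_disjoint hdisj, hcardU]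
  have hq1 : 1 ≤ q := (Fact.out : q.Prime).one_lt.le
  have hAB : A.card = B.card := by omega
  rcases he with rfl | rfl
  · rw [← hA]; omega
  · rw [← hB]; omega

/-- For distinct primes `p 1 ≡ 3 (mod 8)` and `p 2, …, p n ≡ 5 (mod 8)`, `D = 4 p 1 ⋯ p n`,
and `𝒢 = { 1 ≤ a ≤ D : a odd, (p 1 / a) = 1, (a / p i) = 1 for i ≥ 2 }`, we have
`∑_{a ∈ 𝒢} a² ≡ 10 ∏ i ((p i - 1)/2) (mod 16)`, which is `2^n` times an odd integer mod 16;
in particular `16 ∣ ∑_{a ∈ 𝒢} a²` once `n ≥ 4`. -/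
theorem stmt15 (n : ℕ) (hn : 0 < n) (p : Fin n → ℕ) (hp : ∀ i, (p i).Prime)
    (hmod1 : ∀ i : Fin n, (i : ℕ) = 0 → p i % 8 = 3)
    (hmod5 : ∀ i : Fin n, (i : ℕ) ≠ 0 → p i % 8 = 5)
    (hinj : Function.Injective p) :
    (∃ y : ℤ, Odd y ∧
      (∑ a ∈ (Finset.Icc 1 (4 * ∏ i, p i)).filter
            (fun a : ℕ => Odd a ∧ (∀ i : Fin n, (i : ℕ) = 0 → jacobiSym (p i) a = 1) ∧
              (∀ i : Fin n, (i : ℕ) ≠ 0 → jacobiSym (a : ℤ) (p i) = 1)),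
          (a : ℤ) ^ 2) ≡ 2 ^ n * y [ZMOD 16]) ∧
    ((∑ a ∈ (Finset.Icc 1 (4 * ∏ i, p i)).filter
          (fun a : ℕ => Odd a ∧ (∀ i : Fin n, (i : ℕ) = 0 → jacobiSym (p i) a = 1) ∧
            (∀ i : Fin n, (i : ℕ) ≠ 0 → jacobiSym (a : ℤ) (p i) = 1)),
        (a : ℤ) ^ 2) ≡ 10 * ∏ i, (((p i - 1) / 2 : ℕ) : ℤ) [ZMOD 16]) ∧
    (4 ≤ n →
      (16 : ℤ) ∣ ∑ a ∈ (Finset.Icc 1 (4 * ∏ i, p i)).filter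
          (fun a : ℕ => Odd a ∧ (∀ i : Fin n, (i : ℕ) = 0 → jacobiSym (p i) a = 1) ∧
            (∀ i : Fin n, (i : ℕ) ≠ 0 → jacobiSym (a : ℤ) (p i) = 1)),
        (a : ℤ) ^ 2) := by
  classical
  haveI instF : ∀ i, Fact (p i).Prime := fun i => ⟨hp i⟩
  haveI instNZ : ∀ i, NeZero (p i) := fun i => ⟨(hp i).pos.ne'⟩
  have hodd_p : ∀ i, p i % 2 = 1 := by
    intro i
    by_cases h : (i : ℕ) = 0
    · have := hmod1 i h; omega
    · have := hmod5 i h; omega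
  set P : ℕ := ∏ i, p i with hPdef
  have hPodd : P % 2 = 1 := by
    rw [← Nat.odd_iff]
    exact Finset.prod_induction p Odd (fun a b => Odd.mul) odd_one
      (fun i _ => Nat.odd_iff.mpr (hodd_p i))
  have hPpos : 0 < P := Finset.prod_pos fun i _ => (hp i).pos
  set M : ℕ := ∏ i, (p i - 1) / 2 with hMdef
  -- the predicate and the set
  set G : Finset ℕ := (Finset.Icc 1 (4 * P)).filter
      (fun a : ℕ => Odd a ∧ (∀ i : Fin n, (i : ℕ) = 0 → jacobiSym (p i) a = 1) ∧
        (∀ i : Fin n, (i : ℕ) ≠ 0 → jacobiSym (a : ℤ) (p i) = 1)) with hGdef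
  -- mod-4 characterization helpers
  have h4c : ∀ a : ℕ, ((a : ZMod 4) = 1 ↔ a % 4 = 1) ∧ ((a : ZMod 4) = 3 ↔ a % 4 = 3) := by
    intro a
    constructor
    · rw [show (1 : ZMod 4) = ((1 : ℕ) : ZMod 4) by norm_num, ZMod.natCast_eq_natCast_iff']
    · rw [show (3 : ZMod 4) = ((3 : ℕ) : ZMod 4) by norm_num, ZMod.natCast_eq_natCast_iff']
  have hodd4 : ∀ a : ℕ, Odd a ↔ ((a : ZMod 4) = 1 ∨ (a : ZMod 4) = 3) := by
    intro a
    rw [(h4c a).1, (h4c a).2, Nat.odd_iff]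
    omega
  -- characterization of the jacobi conditions via quadratic characters of residues
  have key : ∀ a : ℕ, Odd a →
      (((∀ i : Fin n, (i : ℕ) = 0 → jacobiSym (p i) a = 1) ∧
        (∀ i : Fin n, (i : ℕ) ≠ 0 → jacobiSym (a : ℤ) (p i) = 1)) ↔
       (∀ i : Fin n, quadraticChar (ZMod (p i)) ((a : ℕ) : ZMod (p i)) =
          if (i : ℕ) = 0 ∧ (a : ZMod 4) = 3 then -1 else 1)) := by
    intro a ha
    have hleg : ∀ i : Fin n, jacobiSym (a : ℤ) (p i)
        = quadraticChar (ZMod (p i)) ((a : ℕ) : ZMod (p i)) := by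
      intro i
      rw [← jacobiSym.legendreSym.to_jacobiSym]
      show quadraticChar (ZMod (p i)) ((a : ℤ) : ZMod (p i)) = _
      norm_cast
    constructor
    · rintro ⟨hj0, hj1⟩ i
      by_cases hi : (i : ℕ) = 0
      · have h0 := hj0 i hi
        have hrec := jacobiSym.quadratic_reciprocity (a := p i) (b := a)
          (Nat.odd_iff.mpr (hodd_p i)) ha
        have hp8 := hmod1 i hi
        have hpdiv2 : (p i / 2) % 2 = 1 := by omega
        have haodd := Nat.odd_iff.mp ha
        rcases (by omega : a % 4 = 1 ∨ a % 4 = 3) with h41 | h43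
        · have : (a / 2) % 2 = 0 := by omega
          have hsign : ((-1 : ℤ)) ^ (p i / 2 * (a / 2)) = 1 := by
            apply Even.neg_one_pow
            refine Nat.even_mul.mpr (Or.inr ?_)
            exact Nat.even_iff.mpr this
          rw [hrec, hsign, one_mul, hleg i] at h0
          rw [if_neg, h0]
          rw [(h4c a).2]
          omega
        · have : (a / 2) % 2 = 1 := by omega
          have hsign : ((-1 : ℤ)) ^ (p i / 2 * (a / 2)) = -1 := by
            apply Odd.neg_one_pow
            rw [Nat.odd_mul]
            exact ⟨Nat.odd_iff.mpr hpdiv2, Nat.odd_iff.mpr this⟩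
          rw [hrec, hsign, hleg i] at h0
          rw [if_pos ⟨hi, (h4c a).2.mpr h43⟩]
          linarith [h0]
      · have h1 := hj1 i hi
        rw [hleg i] at h1
        rw [if_neg (by tauto), h1]
    · intro hall
      constructor
      · intro i hi
        have h := hall i
        have hrec := jacobiSym.quadratic_reciprocity (a := p i) (b := a)
          (Nat.odd_iff.mpr (hodd_p i)) ha
        have hp8 := hmod1 i hi
        have hpdiv2 : (p i / 2) % 2 = 1 := by omega
        have haodd := Nat.odd_iff.mp ha
        rcases (by omega : a % 4 = 1 ∨ a % 4 = 3) with h41 | h43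
        · have hne : ¬ ((i : ℕ) = 0 ∧ (a : ZMod 4) = 3) := by
            rintro ⟨-, h3⟩
            rw [(h4c a).2] at h3
            omega
          rw [if_neg hne] at h
          have : (a / 2) % 2 = 0 := by omega
          have hsign : ((-1 : ℤ)) ^ (p i / 2 * (a / 2)) = 1 := by
            apply Even.neg_one_pow
            exact Nat.even_mul.mpr (Or.inr (Nat.even_iff.mpr this))
          rw [hrec, hsign, one_mul, hleg i, h]
        · rw [if_pos ⟨hi, (h4c a).2.mpr h43⟩] at h
          have : (a / 2) % 2 = 1 := by omega
          have hsign : ((-1 : ℤ)) ^ (p i / 2 * (a / 2)) = -1 := by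
            apply Odd.neg_one_pow
            rw [Nat.odd_mul]
            exact ⟨Nat.odd_iff.mpr hpdiv2, Nat.odd_iff.mpr this⟩
          rw [hrec, hsign, hleg i, h]
          norm_num
      · intro i hi
        have h := hall i
        rw [if_neg (by tauto)] at h
        rw [hleg i, h]
  -- CRT facts
  have hcopP : Nat.Coprime 4 P := by
    have h2 : Nat.Coprime 2 P := Nat.coprime_two_left.mpr (Nat.odd_iff.mpr hPodd)
    exact (by norm_num : (4:ℕ) = 2^2) ▸ Nat.Coprime.pow_left 2 h2
  have hcop : Pairwise (Function.onFun Nat.Coprime p) := fun i j hij =>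
    (Nat.coprime_primes (hp i) (hp j)).mpr fun h => hij (hinj h)
  let e1 : ZMod (4 * P) ≃+* ZMod 4 × ZMod P := ZMod.chineseRemainder hcopP
  let e2 : ZMod P ≃+* ∀ i, ZMod (p i) := ZMod.prodEquivPi p hcop
  haveI : NeZero (4 * P) := ⟨by positivity⟩
  have fact_inj : ∀ a b : ℕ, (a : ZMod 4) = (b : ZMod 4) →
      (∀ i, (a : ZMod (p i)) = (b : ZMod (p i))) → a % (4*P) = b % (4*P) := by
    intro a b h4 hi
    have hP : ((a : ℕ) : ZMod P) = ((b : ℕ) : ZMod P) := by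
      apply e2.injective
      rw [map_natCast, map_natCast]
      funext i
      rw [Pi.natCast_apply, Pi.natCast_apply]
      exact hi i
    have h4P : ((a : ℕ) : ZMod (4*P)) = ((b : ℕ) : ZMod (4*P)) := by
      apply e1.injective
      rw [map_natCast, map_natCast]
      simp only [Prod.ext_iff, Prod.fst_natCast, Prod.snd_natCast]
      exact ⟨h4, hP⟩
    rwa [ZMod.natCast_eq_natCast_iff'] at h4P
  have fact_surj : ∀ (u : ZMod 4) (v : ∀ i, ZMod (p i)), ∃ a : ℕ, a < 4*P ∧
      (a : ZMod 4) = u ∧ ∀ i, (a : ZMod (p i)) = v i := by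
    intro u v
    set z : ZMod (4*P) := e1.symm (u, e2.symm v) with hz
    refine ⟨z.val, ZMod.val_lt z, ?_, ?_⟩
    · have hcast : ((z.val : ℕ) : ZMod (4*P)) = z := ZMod.natCast_rightInverse z
      have h1 : e1 z = (u, e2.symm v) := e1.apply_symm_apply _
      have h2 : e1 ((z.val : ℕ) : ZMod (4*P))
          = (((z.val : ℕ) : ZMod 4), ((z.val : ℕ) : ZMod P)) := by
        rw [map_natCast]
        exact Prod.ext (Prod.fst_natCast _) (Prod.snd_natCast _)
      rw [hcast, h1] at h2
      exact (Prod.ext_iff.mp h2).1.symm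
    · intro i
      have hcast : ((z.val : ℕ) : ZMod (4*P)) = z := ZMod.natCast_rightInverse z
      have h1 : e1 z = (u, e2.symm v) := e1.apply_symm_apply _
      have h2 : e1 ((z.val : ℕ) : ZMod (4*P))
          = (((z.val : ℕ) : ZMod 4), ((z.val : ℕ) : ZMod P)) := by
        rw [map_natCast]
        exact Prod.ext (Prod.fst_natCast _) (Prod.snd_natCast _)
      rw [hcast, h1] at h2
      have hPz : ((z.val : ℕ) : ZMod P) = e2.symm v := (Prod.ext_iff.mp h2).2.symm
      have : e2 ((z.val : ℕ) : ZMod P) = v := by rw [hPz, RingEquiv.apply_symm_apply]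
      calc ((z.val : ℕ) : ZMod (p i)) = e2 ((z.val : ℕ) : ZMod P) i := by
            rw [map_natCast, Pi.natCast_apply]
      _ = v i := by rw [this]
  -- counting
  have h13 : (1 : ZMod 4) ≠ 3 := by decide
  have hprodcard : ∀ (u : ZMod 4) (c : Fin n → ℤ), (∀ i, c i = 1 ∨ c i = -1) →
      (Finset.univ.filter (fun x : ZMod 4 × ∀ i, ZMod (p i) =>
        x.1 = u ∧ ∀ i, quadraticChar (ZMod (p i)) (x.2 i) = c i)).card = M := by
    intro u c hc
    have h1 : Finset.univ.filter (fun x : ZMod 4 × ∀ i, ZMod (p i) =>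
          x.1 = u ∧ ∀ i, quadraticChar (ZMod (p i)) (x.2 i) = c i)
        = {u} ×ˢ (Fintype.piFinset fun i =>
            Finset.univ.filter fun t => quadraticChar (ZMod (p i)) t = c i) := by
      ext x
      simp only [Finset.mem_filter, Finset.mem_univ, true_and, Finset.mem_product,
        Finset.mem_singleton, Fintype.mem_piFinset]
    rw [h1, Finset.card_product, Finset.card_singleton, one_mul, Fintype.card_piFinset, hMdef]
    exact Finset.prod_congr rfl fun i _ => auxcount (p i) (hodd_p i) (c i) (hc i)
  have hcount : G.card = 2 * M := by
    set T : Finset (ZMod 4 × ∀ i, ZMod (p i)) := Finset.univ.filter (fun x =>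
      (x.1 = 1 ∨ x.1 = 3) ∧ ∀ i : Fin n, quadraticChar (ZMod (p i)) (x.2 i) =
        if (i:ℕ) = 0 ∧ x.1 = 3 then -1 else 1) with hT
    have hGT : G.card = T.card := by
      apply Finset.card_bij (fun (a : ℕ) (_ : a ∈ G) =>
        (((a : ZMod 4), fun i => (a : ZMod (p i))) : ZMod 4 × ∀ i, ZMod (p i)))
      · intro a ha
        rw [hGdef, Finset.mem_filter] at ha
        obtain ⟨hicc, hodd, hj⟩ := ha
        rw [hT, Finset.mem_filter]
        exact ⟨Finset.mem_univ _, (hodd4 a).mp hodd, (key a hodd).mp hj⟩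
      · intro a1 h1 a2 h2 heq
        have e4 : (a1 : ZMod 4) = a2 := congrArg Prod.fst heq
        have ep : ∀ i, (a1 : ZMod (p i)) = a2 := fun i => congrFun (congrArg Prod.snd heq) i
        have hmod := fact_inj a1 a2 e4 ep
        rw [hGdef, Finset.mem_filter, Finset.mem_Icc] at h1 h2
        have ho1 := Nat.odd_iff.mp h1.2.1
        have ho2 := Nat.odd_iff.mp h2.2.1
        have hP2 : (4 * P) % 2 = 0 := by omega
        have hl1 : a1 < 4 * P := by rcases h1.1 with ⟨u1, u2⟩; omega
        have hl2 : a2 < 4 * P := by rcases h2.1 with ⟨u1, u2⟩; omega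
        rwa [Nat.mod_eq_of_lt hl1, Nat.mod_eq_of_lt hl2] at hmod
      · intro x hx
        rw [hT, Finset.mem_filter] at hx
        obtain ⟨-, hx1, hx2⟩ := hx
        obtain ⟨a, halt, ha4, hap⟩ := fact_surj x.1 x.2
        have hane : a ≠ 0 := by
          rintro rfl
          rcases hx1 with h | h <;> rw [← ha4, Nat.cast_zero] at h <;> revert h <;> decide
        have haodd : Odd a := (hodd4 a).mpr (by rw [ha4]; exact hx1)
        have hmemG : a ∈ G := by
          rw [hGdef, Finset.mem_filter, Finset.mem_Icc]
          refine ⟨⟨by omega, by omega⟩, haodd, ?_⟩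
          apply (key a haodd).mpr
          intro i
          rw [hap i, ha4]
          exact hx2 i
        exact ⟨a, hmemG, Prod.ext ha4 (funext hap)⟩
    have hsplit : T = (Finset.univ.filter (fun x : ZMod 4 × ∀ i, ZMod (p i) =>
          x.1 = 1 ∧ ∀ i, quadraticChar (ZMod (p i)) (x.2 i) = (fun _ : Fin n => (1:ℤ)) i))
        ∪ (Finset.univ.filter (fun x : ZMod 4 × ∀ i, ZMod (p i) =>
          x.1 = 3 ∧ ∀ i, quadraticChar (ZMod (p i)) (x.2 i) =
            (fun i : Fin n => if (i:ℕ) = 0 then (-1:ℤ) else 1) i)) := by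
      ext x
      simp only [hT, Finset.mem_union, Finset.mem_filter, Finset.mem_univ, true_and]
      constructor
      · rintro ⟨h1 | h3, h⟩
        · refine Or.inl ⟨h1, fun i => ?_⟩
          have hi := h i
          rw [if_neg (by rintro ⟨-, hc⟩; rw [h1] at hc; exact h13 hc)] at hi
          exact hi
        · refine Or.inr ⟨h3, fun i => ?_⟩
          have hi := h i
          by_cases h0 : (i : ℕ) = 0
          · rw [if_pos ⟨h0, h3⟩] at hi; simpa [h0] using hi
          · rw [if_neg (by tauto)] at hi; simpa [h0] using hi
      · rintro (⟨h1, h⟩ | ⟨h3, h⟩)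
        · refine ⟨Or.inl h1, fun i => ?_⟩
          rw [if_neg (by rintro ⟨-, hc⟩; rw [h1] at hc; exact h13 hc)]
          exact h i
        · refine ⟨Or.inr h3, fun i => ?_⟩
          have hi := h i
          by_cases h0 : (i : ℕ) = 0
          · rw [if_pos ⟨h0, h3⟩]; simpa [h0] using hi
          · rw [if_neg (by tauto)]; simpa [h0] using hi
    have hdisjT : Disjoint
        (Finset.univ.filter (fun x : ZMod 4 × ∀ i, ZMod (p i) =>
          x.1 = 1 ∧ ∀ i, quadraticChar (ZMod (p i)) (x.2 i) = (fun _ : Fin n => (1:ℤ)) i))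
        (Finset.univ.filter (fun x : ZMod 4 × ∀ i, ZMod (p i) =>
          x.1 = 3 ∧ ∀ i, quadraticChar (ZMod (p i)) (x.2 i) =
            (fun i : Fin n => if (i:ℕ) = 0 then (-1:ℤ) else 1) i)) := by
      rw [Finset.disjoint_filter]
      rintro x - ⟨h1, -⟩ ⟨h3, -⟩
      rw [h1] at h3
      exact h13 h3
    rw [hGT, hsplit, Finset.card_union_of_disjoint hdisjT,
      hprodcard 1 (fun _ => (1:ℤ)) (fun _ => Or.inl rfl),
      hprodcard 3 (fun i => if (i:ℕ) = 0 then (-1:ℤ) else 1)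
        (fun i => by by_cases h0 : (i:ℕ) = 0 <;> simp [h0]),
      two_mul]
  -- closure under a ↦ 4P - a
  have hGelem : ∀ a ∈ G, Odd a ∧ 1 ≤ a ∧ a < 4 * P := by
    intro a ha
    rw [hGdef, Finset.mem_filter, Finset.mem_Icc] at ha
    obtain ⟨⟨u1, u2⟩, hodd, -⟩ := ha
    have := Nat.odd_iff.mp hodd
    exact ⟨hodd, u1, by omega⟩
  have hflipmem : ∀ a ∈ G, (4 * P - a) ∈ G := by
    intro a ha
    obtain ⟨hodd, h1, hlt⟩ := hGelem a ha
    rw [hGdef, Finset.mem_filter, Finset.mem_Icc] at ha ⊢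
    obtain ⟨-, -, hj⟩ := ha
    have haodd2 := Nat.odd_iff.mp hodd
    have hodd' : Odd (4 * P - a) := by rw [Nat.odd_iff]; omega
    refine ⟨⟨by omega, by omega⟩, hodd', ?_⟩
    have hch := (key a hodd).mp hj
    apply (key _ hodd').mpr
    intro i
    have hsub4 : ((4 * P - a : ℕ) : ZMod 4) = - ((a : ℕ) : ZMod 4) := by
      rw [Nat.cast_sub hlt.le]
      have h0 : ((4 * P : ℕ) : ZMod 4) = 0 :=
        (ZMod.natCast_eq_zero_iff _ _).mpr ⟨P, rfl⟩
      rw [h0, zero_sub]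
    have hsubp : ((4 * P - a : ℕ) : ZMod (p i)) = - ((a : ℕ) : ZMod (p i)) := by
      rw [Nat.cast_sub hlt.le]
      have h0 : ((4 * P : ℕ) : ZMod (p i)) = 0 := by
        rw [ZMod.natCast_eq_zero_iff]
        exact Dvd.dvd.mul_left (Finset.dvd_prod_of_mem p (Finset.mem_univ i)) 4
      rw [h0, zero_sub]
    rw [hsub4, hsubp]
    have hchar2 : ringChar (ZMod (p i)) ≠ 2 := by
      rw [ZMod.ringChar_zmod_n]
      have := hodd_p i; omega
    have hneg : quadraticChar (ZMod (p i)) (-((a:ℕ) : ZMod (p i)))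
        = quadraticChar (ZMod (p i)) (-1) * quadraticChar (ZMod (p i)) ((a:ℕ) : ZMod (p i)) := by
      rw [← map_mul]
      norm_num
    have hm1 : quadraticChar (ZMod (p i)) (-1) = if (i:ℕ) = 0 then -1 else 1 := by
      rw [quadraticChar_neg_one hchar2, ZMod.card]
      by_cases h0 : (i:ℕ) = 0
      · rw [if_pos h0]
        exact ZMod.χ₄_nat_three_mod_four (by have := hmod1 i h0; omega)
      · rw [if_neg h0]
        exact ZMod.χ₄_nat_one_mod_four (by have := hmod5 i h0; omega)
    have hchi := hch i
    have hd1 : -(1 : ZMod 4) = 3 := by decide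
    have hd3 : -(3 : ZMod 4) = 1 := by decide
    rcases (hodd4 a).mp hodd with hu1 | hu3
    · rw [hu1] at hchi ⊢
      rw [hd1, hneg, hm1]
      by_cases h0 : (i:ℕ) = 0
      · rw [if_pos h0, if_pos ⟨h0, rfl⟩]
        rw [if_neg (by rintro ⟨-, hc⟩; exact h13 hc)] at hchi
        rw [hchi]; ring
      · rw [if_neg h0, if_neg (by tauto)]
        rw [if_neg (by tauto)] at hchi
        rw [hchi]; ring
    · rw [hu3] at hchi ⊢
      rw [hd3, hneg, hm1]
      by_cases h0 : (i:ℕ) = 0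
      · rw [if_pos h0, if_neg (by rintro ⟨-, hc⟩; exact h13 hc)]
        rw [if_pos ⟨h0, rfl⟩] at hchi
        rw [hchi]; ring
      · rw [if_neg h0, if_neg (by tauto)]
        rw [if_neg (by tauto)] at hchi
        rw [hchi]; ring
  -- pairing and the sum mod 16
  set f : ℕ → ZMod 16 := fun a => ((a : ZMod 16))^2 with hf
  have hpairsum : ∀ a ∈ G, f a + f (4 * P - a) = 10 := by
    intro a ha
    obtain ⟨hodd, h1, hlt⟩ := hGelem a ha
    have h16 : (16 : ZMod 16) = 0 := by decide
    have hc : ((4 * P - a : ℕ) : ZMod 16) = 4 * (P : ZMod 16) - ((a:ℕ) : ZMod 16) := by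
      rw [Nat.cast_sub hlt.le]; push_cast; ring
    have h2 := aux2sq a hodd
    have h8 := aux8 (P * a) (Odd.mul (Nat.odd_iff.mpr hPodd) hodd)
    have h8' : (8 : ZMod 16) * ((P : ZMod 16) * ((a:ℕ) : ZMod 16)) = 8 := by
      push_cast at h8
      exact h8
    show ((a:ℕ) : ZMod 16)^2 + ((4 * P - a : ℕ) : ZMod 16)^2 = 10
    rw [hc]
    linear_combination h2 - h8' + ((P : ZMod 16)^2 - 1) * h16
  set G₁ : Finset ℕ := G.filter (fun a => a < 2 * P) with hG1
  set G₂ : Finset ℕ := G.filter (fun a => ¬ a < 2 * P) with hG2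
  have hdisj12 : Disjoint G₁ G₂ := Finset.disjoint_filter_filter_not G G _
  have hunion12 : G₁ ∪ G₂ = G := Finset.filter_union_filter_not_eq _ G
  have hmap12 : ∀ a ∈ G₁, 4 * P - a ∈ G₂ := by
    intro a ha
    rw [hG1, Finset.mem_filter] at ha
    obtain ⟨haG, hal⟩ := ha
    obtain ⟨hodd, h1, hlt⟩ := hGelem a haG
    rw [hG2, Finset.mem_filter]
    exact ⟨hflipmem a haG, by omega⟩
  have hmap21 : ∀ a ∈ G₂, 4 * P - a ∈ G₁ := by
    intro a ha
    rw [hG2, Finset.mem_filter] at ha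
    obtain ⟨haG, hal⟩ := ha
    obtain ⟨hodd, h1, hlt⟩ := hGelem a haG
    have := Nat.odd_iff.mp hodd
    have hP2 : (2 * P) % 2 = 0 := by omega
    rw [hG1, Finset.mem_filter]
    exact ⟨hflipmem a haG, by omega⟩
  have hinv : ∀ a ∈ G, 4 * P - (4 * P - a) = a := by
    intro a ha
    obtain ⟨-, h1, hlt⟩ := hGelem a ha
    omega
  have hsum2 : ∑ a ∈ G₂, f a = ∑ a ∈ G₁, f (4 * P - a) := by
    apply Finset.sum_nbij' (i := fun a => 4 * P - a) (j := fun a => 4 * P - a) hmap21 hmap12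
    · intro a ha
      exact hinv a (Finset.mem_filter.mp (hG2 ▸ ha)).1
    · intro a ha
      exact hinv a (Finset.mem_filter.mp (hG1 ▸ ha)).1
    · intro a ha
      have haG := (Finset.mem_filter.mp (hG2 ▸ ha)).1
      rw [hinv a haG]
  have hcard12 : G₁.card = G₂.card := by
    apply Finset.card_nbij' (i := fun a => 4 * P - a) (j := fun a => 4 * P - a) hmap12 hmap21
    · intro a ha
      exact hinv a (Finset.mem_filter.mp (hG1 ▸ ha)).1
    · intro a ha
      exact hinv a (Finset.mem_filter.mp (hG2 ▸ ha)).1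
  have hcardG : G.card = G₁.card + G₂.card := by
    rw [← hunion12, Finset.card_union_of_disjoint hdisj12]
  have hG1card : G₁.card = M := by omega
  have htot : ∑ a ∈ G, f a = 10 * (M : ZMod 16) := by
    calc ∑ a ∈ G, f a = ∑ a ∈ G₁ ∪ G₂, f a := by rw [hunion12]
    _ = ∑ a ∈ G₁, f a + ∑ a ∈ G₂, f a := Finset.sum_union hdisj12
    _ = ∑ a ∈ G₁, (f a + f (4 * P - a)) := by rw [hsum2, Finset.sum_add_distrib]
    _ = ∑ a ∈ G₁, (10 : ZMod 16) := by
        apply Finset.sum_congr rfl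
        intro a ha
        exact hpairsum a (Finset.mem_filter.mp (hG1 ▸ ha)).1
    _ = G₁.card • (10 : ZMod 16) := Finset.sum_const _
    _ = 10 * (M : ZMod 16) := by rw [hG1card, nsmul_eq_mul, mul_comm]
  -- main congruence
  have hmain : (∑ a ∈ G, (a : ℤ)^2) ≡ 10 * (M : ℤ) [ZMOD (16:ℕ)] := by
    rw [← ZMod.intCast_eq_intCast_iff]
    push_cast
    exact htot
  -- factor M = 2^(n-1) * (odd)
  set q : Fin n → ℕ := fun i => if (i:ℕ) = 0 then (p i - 1)/2 else (p i - 1)/4 with hq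
  have hqval : ∀ i : Fin n, ((i:ℕ) = 0 → q i = (p i - 1)/2) ∧ ((i:ℕ) ≠ 0 → q i = (p i - 1)/4) := by
    intro i
    constructor <;> intro h0 <;> simp [hq, h0]
  have hqodd : ∀ i, Odd (q i) := by
    intro i
    rw [Nat.odd_iff]
    by_cases h0 : (i:ℕ) = 0
    · rw [(hqval i).1 h0]; have := hmod1 i h0; omega
    · rw [(hqval i).2 h0]; have := hmod5 i h0; omega
  have hQodd : Odd (∏ i, q i) :=
    Finset.prod_induction q Odd (fun a b => Odd.mul) odd_one (fun i _ => hqodd i)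
  have hfac : M = 2^(n-1) * ∏ i, q i := by
    have hstep : ∀ i : Fin n, (p i - 1)/2 = (if (i:ℕ) = 0 then 1 else 2) * q i := by
      intro i
      by_cases h0 : (i:ℕ) = 0
      · rw [if_pos h0, (hqval i).1 h0, one_mul]
      · rw [if_neg h0, (hqval i).2 h0]; have := hmod5 i h0; omega
    rw [hMdef, Finset.prod_congr rfl (fun i _ => hstep i), Finset.prod_mul_distrib]
    congr 1
    obtain ⟨n', rfl⟩ : ∃ n', n = n' + 1 := ⟨n - 1, by omega⟩
    rw [Fin.prod_univ_succ]
    simp [Fin.val_succ]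
  set y : ℤ := ((5 * ∏ i, q i : ℕ) : ℤ) with hy
  have hyodd : Odd y := by
    rw [hy, Int.odd_coe_nat]
    exact Odd.mul (by decide) hQodd
  have h10M : 10 * (M : ℤ) = 2^n * y := by
    have hnat : 10 * M = 2^n * (5 * ∏ i, q i) := by
      have h2n : (2:ℕ)^n = 2^(n-1) * 2 := by
        rw [← pow_succ]
        congr 1
        omega
      rw [hfac, h2n]
      ring
    rw [hy]
    exact_mod_cast congrArg (fun t : ℕ => (t : ℤ)) hnat
  have hMcast : (M : ℤ) = ∏ i, (((p i - 1) / 2 : ℕ) : ℤ) := by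
    rw [hMdef]; push_cast; rfl
  have hmain' : (∑ a ∈ G, (a : ℤ)^2) ≡ 10 * ∏ i, (((p i - 1) / 2 : ℕ) : ℤ) [ZMOD (16:ℕ)] := by
    rw [← hMcast]; exact hmain
  refine ⟨⟨y, hyodd, ?_⟩, ?_, ?_⟩
  · have : (∑ a ∈ G, (a : ℤ)^2) ≡ 2^n * y [ZMOD (16:ℕ)] := by
      rw [← h10M]; exact hmain
    exact_mod_cast this
  · exact_mod_cast hmain'
  · intro h4n
    have hdvd : (16 : ℤ) ∣ 2^n * y := by
      refine Dvd.dvd.mul_right ?_ y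
      have : (2:ℤ)^4 ∣ 2^n := pow_dvd_pow 2 (by omega)
      norm_num at this
      exact this
    have hcong : (∑ a ∈ G, (a : ℤ)^2) ≡ 2^n * y [ZMOD (16:ℕ)] := by
      rw [← h10M]; exact hmain
    have h0 : (∑ a ∈ G, (a : ℤ)^2) ≡ 0 [ZMOD (16:ℕ)] :=
      hcong.trans (Int.modEq_zero_iff_dvd.mpr (by exact_mod_cast hdvd))
    have := Int.modEq_zero_iff_dvd.mp h0
    exact_mod_cast this
end

section
/- Let p₁ and p₂ be primes with p₁ ≡ 3 (mod 8) and p₂ ≡ 5 (mod 8), and set D = 4p₁p₂. Then v₂(L(χ_D, −1)) ≥ 3, i.e. the rational number (1/(2D)) · Σ_{a=1}^{D} χ_D(a) a² has 2-adic valuation at least 3. -/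
open Finset

namespace BS16

def chi (m a : ℕ) : ℤ := if Odd a then jacobiSym (m : ℤ) a else 0
def psi (m b : ℕ) : ℤ := jacobiSym (b : ℤ) m

def Ssum (m : ℕ) : ℤ := ∑ i ∈ range (4 * m), chi m (1 + i) * ((1 + i : ℕ) : ℤ) ^ 2
def Tsum (m : ℕ) : ℤ := ∑ i ∈ range m, chi m (2 * i + 1) * (2 * (i : ℤ) + 1 + m)
def T1sum (m : ℕ) : ℤ := ∑ i ∈ range m, chi m (2 * i + 1) * (2 * (i : ℤ) + 1 - m)
def G2sum (m M : ℕ) : ℤ := ∑ i ∈ range M, (-1 : ℤ) ^ i * psi m (i + 1) * ((i : ℤ) + 1)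
def GAsum (m M : ℕ) : ℤ := ∑ i ∈ range M, psi m (i + 1) * ((i : ℤ) + 1)
def Csum (m M : ℕ) : ℤ := ∑ i ∈ range M, psi m (i + 1)
def Esum (m K : ℕ) : ℤ := ∑ i ∈ range K, psi m (i + 1) * ((i : ℤ) + 1)

lemma sum_range_two_mul (f : ℕ → ℤ) (n : ℕ) :
    ∑ i ∈ range (2 * n), f i = ∑ i ∈ range n, (f (2 * i) + f (2 * i + 1)) := by
  induction n with
  | zero => simp
  | succ n ih =>
    have h : 2 * (n + 1) = (2 * n) + 1 + 1 := by ring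
    rw [h, sum_range_succ, sum_range_succ, ih, sum_range_succ]
    ring

lemma sum_range_split (f : ℕ → ℤ) (a b : ℕ) :
    ∑ i ∈ range (a + b), f i = ∑ i ∈ range a, f i + ∑ i ∈ range b, f (a + i) := by
  rw [← Finset.sum_range_add_sum_Ico f (Nat.le_add_right a b), Finset.sum_Ico_eq_sum_range]
  simp

section jacobi


variable {m : ℕ} (hm8 : m % 8 = 7)

include hm8

lemma hm_odd : Odd m := by rw [Nat.odd_iff]; omega

lemma chi4m : ZMod.χ₄ (m : ZMod 4) = -1 := by
  have : ((m : ℕ) : ZMod 4) = ((m % 4 : ℕ) : ZMod 4) := (ZMod.natCast_mod m 4).symm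
  have h4 : m % 4 = 3 := by omega
  rw [this, h4]; decide

lemma chi8m : ZMod.χ₈ (m : ZMod 8) = 1 := by
  have : ((m : ℕ) : ZMod 8) = ((m % 8 : ℕ) : ZMod 8) := (ZMod.natCast_mod m 8).symm
  rw [this, hm8]; decide

lemma psi_two_mul (c : ℕ) : psi m (2 * c) = psi m c := by
  unfold psi
  have h : ((2 * c : ℕ) : ℤ) = 2 * (c : ℤ) := by push_cast; ring
  rw [h, jacobiSym.mul_left, jacobiSym.at_two (hm_odd hm8), chi8m hm8, one_mul]

lemma psi_mod {a b : ℕ} (h : (a : ℤ) % m = (b : ℤ) % m) : psi m a = psi m b :=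
  jacobiSym.mod_left' h

lemma psi_neg_arg {b : ℕ} : jacobiSym (-(b : ℤ)) m = - psi m b := by
  unfold psi
  rw [jacobiSym.neg _ (hm_odd hm8), chi4m hm8, neg_one_mul]

lemma psi_reflect {b : ℕ} (hb : b ≤ m) : psi m (m - b) = - psi m b := by
  have h1 : psi m (m - b) = jacobiSym (-(b:ℤ)) m := by
    apply jacobiSym.mod_left'
    have hc : ((m - b : ℕ) : ℤ) = (m : ℤ) - b := by omega
    rw [hc]
    conv_lhs => rw [show (m : ℤ) - b = -(b:ℤ) + (m:ℤ) * 1 by ring]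
    rw [Int.add_mul_emod_self_left]
  rw [h1, psi_neg_arg hm8]

/-- reciprocity: for odd `a`, `χ a = ±ψ a` with sign depending on `a % 4`. -/
lemma chi_odd {a : ℕ} (ha : Odd a) :
    chi m a = (if a % 4 = 3 then -1 else 1) * psi m a := by
  unfold chi psi
  rw [if_pos ha]
  have h := jacobiSym.quadratic_reciprocity_if (Nat.odd_iff.mp ha) (Nat.odd_iff.mp (hm_odd hm8))
  have hm4 : m % 4 = 3 := by omega
  by_cases h4 : a % 4 = 3
  · simp only [h4, hm4, and_self, if_true] at h
    rw [if_pos h4, neg_one_mul, ← h, neg_neg]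
  · simp only [h4, hm4, false_and, if_false] at h
    rw [if_neg h4, one_mul, h]

lemma chi_even {a : ℕ} (ha : ¬ Odd a) : chi m a = 0 := by
  unfold chi; rw [if_neg ha]

omit hm8 in
lemma odd_cases {a : ℕ} (ha : Odd a) : a % 4 = 1 ∨ a % 4 = 3 := by
  rw [Nat.odd_iff] at ha; omega

/-- K1 : `χ (a + 2m) = - χ a`. -/
lemma chi_shift {a : ℕ} (ha : Odd a) : chi m (a + 2 * m) = - chi m a := by
  have ha' : Odd (a + 2 * m) := by rw [Nat.odd_iff] at ha ⊢; omega
  rw [chi_odd hm8 ha, chi_odd hm8 ha']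
  have hψ : psi m (a + 2 * m) = psi m a := by
    apply psi_mod hm8
    push_cast
    conv_lhs => rw [show (a : ℤ) + 2 * m = (a:ℤ) + (m:ℤ) * 2 by ring]
    rw [Int.add_mul_emod_self_left]
  rw [hψ]
  rcases odd_cases ha with h1 | h3
  · have : (a + 2 * m) % 4 = 3 := by omega
    rw [if_pos this, if_neg (by omega)]; ring
  · have : (a + 2 * m) % 4 = 1 := by omega
    rw [if_neg (by omega), if_pos h3]; ring

/-- K2 : `χ (2m - a) = - χ a` for odd `a ≤ 2m`. -/
lemma chi_reflect {a : ℕ} (ha : Odd a) (h2m : a ≤ 2 * m) :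
    chi m (2 * m - a) = - chi m a := by
  have hlt : a < 2 * m := by
    rcases Nat.lt_or_ge a (2*m) with h | h
    · exact h
    · exfalso; rw [Nat.odd_iff] at ha; omega
  have ha' : Odd (2 * m - a) := by rw [Nat.odd_iff] at ha ⊢; omega
  rw [chi_odd hm8 ha, chi_odd hm8 ha']
  have hψ : psi m (2 * m - a) = - psi m a := by
    have h1 : psi m (2*m - a) = jacobiSym (-(a:ℤ)) m := by
      apply jacobiSym.mod_left'
      have hc : ((2*m - a : ℕ) : ℤ) = 2*(m : ℤ) - a := by omega
      rw [hc]
      conv_lhs => rw [show 2*(m : ℤ) - a = -(a:ℤ) + (m:ℤ) * 2 by ring]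
      rw [Int.add_mul_emod_self_left]
    rw [h1, psi_neg_arg hm8]
  rw [hψ]
  rcases odd_cases ha with h1 | h3
  · rw [if_neg (by omega), if_neg (by omega)]; ring
  · rw [if_pos (by omega : (2*m - a) % 4 = 3), if_pos h3]; ring

/-- K3 : `χ (m - 2b) = (-1)^b ψ b` for `2b < m`. -/
lemma chi_m_sub {b : ℕ} (hb : 2 * b < m) :
    chi m (m - 2 * b) = (-1) ^ b * psi m b := by
  have ha' : Odd (m - 2 * b) := by
    have := hm8; rw [Nat.odd_iff]; omega
  rw [chi_odd hm8 ha']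
  have hψ : psi m (m - 2 * b) = - psi m b := by
    have h1 : psi m (m - 2*b) = jacobiSym ((-1) * (2 * (b:ℤ))) m := by
      apply jacobiSym.mod_left'
      have hc : ((m - 2*b : ℕ) : ℤ) = (m : ℤ) - 2*b := by omega
      rw [hc]
      conv_lhs => rw [show (m : ℤ) - 2*b = (-1) * (2*(b:ℤ)) + (m:ℤ) * 1 by ring]
      rw [Int.add_mul_emod_self_left]
    rw [h1, jacobiSym.mul_left, jacobiSym.mul_left,
      jacobiSym.at_neg_one (hm_odd hm8), chi4m hm8,
      jacobiSym.at_two (hm_odd hm8), chi8m hm8]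
    unfold psi; ring
  rw [hψ]
  rcases Nat.even_or_odd b with he | ho
  · rw [if_pos (by rw [Nat.even_iff] at he; omega), Even.neg_one_pow he]; ring
  · rw [if_neg (by rw [Nat.odd_iff] at ho; omega), Odd.neg_one_pow ho]; ring

/-- K4 : `χ (m + 2b) = -(-1)^b ψ b`. -/
lemma chi_m_add (b : ℕ) : chi m (m + 2 * b) = -((-1) ^ b * psi m b) := by
  have ha' : Odd (m + 2 * b) := by rw [Nat.odd_iff]; omega
  rw [chi_odd hm8 ha']
  have hψ : psi m (m + 2 * b) = psi m b := by
    have h1 : psi m (m + 2*b) = jacobiSym (2 * (b:ℤ)) m := by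
      apply jacobiSym.mod_left'
      push_cast
      conv_lhs => rw [show (m : ℤ) + 2*b = 2*(b:ℤ) + (m:ℤ) * 1 by ring]
      rw [Int.add_mul_emod_self_left]
    rw [h1, jacobiSym.mul_left, jacobiSym.at_two (hm_odd hm8), chi8m hm8]
    unfold psi; ring
  rw [hψ]
  rcases Nat.even_or_odd b with he | ho
  · rw [if_pos (by rw [Nat.even_iff] at he; omega), Even.neg_one_pow he]; ring
  · rw [if_neg (by rw [Nat.odd_iff] at ho; omega), Odd.neg_one_pow ho]; ring


end jacobi

variable {m : ℕ}

lemma step1 (hm8 : m % 8 = 7) : Ssum m = -4 * (m : ℤ) * Tsum m := by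
  unfold Ssum Tsum
  have h4 : 4 * m = 2 * (2 * m) := by ring
  rw [h4, sum_range_two_mul (fun i => chi m (1 + i) * ((1 + i : ℕ) : ℤ) ^ 2)]
  have h5 : ∀ i ∈ range (2 * m),
      (chi m (1 + 2 * i) * ((1 + 2 * i : ℕ) : ℤ) ^ 2
        + chi m (1 + (2 * i + 1)) * ((1 + (2 * i + 1) : ℕ) : ℤ) ^ 2)
      = chi m (2 * i + 1) * ((2 * i + 1 : ℕ) : ℤ) ^ 2 := by
    intro i _
    have he : chi m (1 + (2 * i + 1)) = 0 := by
      apply chi_even hm8; rw [Nat.odd_iff]; omega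
    rw [he, show 1 + 2 * i = 2 * i + 1 by ring]; ring
  rw [Finset.sum_congr rfl h5, show 2 * m = m + m by ring,
    sum_range_split (fun i => chi m (2 * i + 1) * ((2 * i + 1 : ℕ) : ℤ) ^ 2)]
  have h6 : ∀ i ∈ range m,
      chi m (2 * (m + i) + 1) * ((2 * (m + i) + 1 : ℕ) : ℤ) ^ 2
      = - chi m (2 * i + 1) * (((2 * i + 1) + 2 * m : ℕ) : ℤ) ^ 2 := by
    intro i _
    have hidx : 2 * (m + i) + 1 = (2 * i + 1) + 2 * m := by ring
    rw [hidx, chi_shift hm8 (by rw [Nat.odd_iff]; omega)]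
  rw [Finset.sum_congr rfl h6, ← Finset.sum_add_distrib, Finset.mul_sum]
  apply Finset.sum_congr rfl
  intro i _
  push_cast
  ring

lemma step2 (hm8 : m % 8 = 7) : Tsum m = T1sum m := by
  have key : ∑ i ∈ range m,
      ((fun i => chi m (2 * i + 1) * (2 * (i : ℤ) + 1 + m)) (m - 1 - i)
        + chi m (2 * i + 1) * (2 * (i : ℤ) + 1 + m)) = 2 * T1sum m := by
    rw [T1sum, Finset.mul_sum]
    apply Finset.sum_congr rfl
    intro i hi
    have him : i < m := Finset.mem_range.mp hi
    simp only
    have hidx : 2 * (m - 1 - i) + 1 = 2 * m - (2 * i + 1) := by omega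
    have hcast : ((m - 1 - i : ℕ) : ℤ) = (m : ℤ) - 1 - i := by omega
    rw [hidx, hcast, chi_reflect hm8 (by rw [Nat.odd_iff]; omega) (by omega)]
    ring
  rw [Finset.sum_add_distrib,
    Finset.sum_range_reflect (fun i => chi m (2 * i + 1) * (2 * (i : ℤ) + 1 + m)) m] at key
  have h2 : (2 : ℤ) * Tsum m = 2 * T1sum m := by
    rw [two_mul, ← key, Tsum]
  exact mul_left_cancel₀ (by norm_num) h2

lemma step3 (hm8 : m % 8 = 7) (M : ℕ) (hM : m = 2 * M + 1) :
    T1sum m = 4 * G2sum m M := by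
  have hmZ : (m : ℤ) = 2 * (M : ℤ) + 1 := by exact_mod_cast congrArg (Nat.cast : ℕ → ℤ) hM
  have hr : range m = range ((M + 1) + M) := by rw [show m = (M + 1) + M by omega]
  have hsplit : T1sum m = ∑ i ∈ range ((M + 1) + M),
      chi m (2 * i + 1) * (2 * (i : ℤ) + 1 - m) := by
    unfold T1sum; rw [hr]
  rw [hsplit, sum_range_split (fun i => chi m (2 * i + 1) * (2 * (i : ℤ) + 1 - m)),
    sum_range_succ]
  have hmid : chi m (2 * M + 1) * (2 * (M : ℤ) + 1 - m) = 0 := by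
    have h0 : 2 * (M : ℤ) + 1 - m = 0 := by rw [hmZ]; ring
    rw [h0, mul_zero]
  rw [hmid, add_zero,
    ← Finset.sum_range_reflect (fun i => chi m (2 * i + 1) * (2 * (i : ℤ) + 1 - m)) M,
    ← Finset.sum_add_distrib, G2sum, Finset.mul_sum]
  apply Finset.sum_congr rfl
  intro i hi
  have hiM : i < M := Finset.mem_range.mp hi
  have hidx1 : 2 * (M - 1 - i) + 1 = m - 2 * (i + 1) := by omega
  have hidx2 : 2 * ((M + 1) + i) + 1 = m + 2 * (i + 1) := by omega
  have hcast1 : ((M - 1 - i : ℕ) : ℤ) = (M : ℤ) - 1 - i := by omega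
  rw [hidx1, hidx2, hcast1, chi_m_sub hm8 (by omega), chi_m_add hm8, pow_succ, hmZ]
  push_cast
  ring

lemma gall_zero (hm8 : m % 8 = 7) (M : ℕ) (hM : m = 2 * M + 1) : GAsum m M = 0 := by
  have hmZ : (m : ℤ) = 2 * (M : ℤ) + 1 := by exact_mod_cast congrArg (Nat.cast : ℕ → ℤ) hM
  -- Full sum over range (2*M)
  have halpha : ∑ i ∈ range (2 * M), psi m (i + 1) * ((i : ℤ) + 1)
      = 2 * GAsum m M - (m : ℤ) * Csum m M := by
    rw [show 2 * M = M + M by ring,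
      sum_range_split (fun i => psi m (i + 1) * ((i : ℤ) + 1)),
      ← Finset.sum_range_reflect (fun i => psi m ((M + i) + 1) * (((M + i : ℕ) : ℤ) + 1)) M]
    have h2 : ∀ i ∈ range M,
        psi m ((M + (M - 1 - i)) + 1) * (((M + (M - 1 - i) : ℕ) : ℤ) + 1)
        = psi m (i + 1) * ((i : ℤ) + 1) - (m : ℤ) * psi m (i + 1) := by
      intro i hi
      have hiM : i < M := Finset.mem_range.mp hi
      have hidx : (M + (M - 1 - i)) + 1 = m - (i + 1) := by omega
      have hcast : ((M + (M - 1 - i) : ℕ) : ℤ) = 2 * (M : ℤ) - 1 - i := by omega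
      rw [hidx, hcast, psi_reflect hm8 (by omega), hmZ]
      ring
    rw [Finset.sum_congr rfl h2, Finset.sum_sub_distrib, ← Finset.mul_sum]
    unfold GAsum Csum
    ring
  have hbeta : ∑ i ∈ range (2 * M), psi m (i + 1) * ((i : ℤ) + 1)
      = 4 * GAsum m M - (m : ℤ) * Csum m M := by
    rw [sum_range_two_mul (fun i => psi m (i + 1) * ((i : ℤ) + 1))]
    have h3 : ∀ i ∈ range M,
        (psi m (2 * i + 1) * (((2 * i : ℕ) : ℤ) + 1)
          + psi m ((2 * i + 1) + 1) * (((2 * i + 1 : ℕ) : ℤ) + 1))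
        = psi m (2 * i + 1) * (2 * (i : ℤ) + 1) + 2 * (psi m (i + 1) * ((i : ℤ) + 1)) := by
      intro i _
      have hidx : (2 * i + 1) + 1 = 2 * (i + 1) := by ring
      rw [hidx, psi_two_mul hm8]
      push_cast
      ring
    rw [Finset.sum_congr rfl h3, Finset.sum_add_distrib, ← Finset.mul_sum]
    -- odd part
    have hod : ∑ i ∈ range M, psi m (2 * i + 1) * (2 * (i : ℤ) + 1)
        = 2 * GAsum m M - (m : ℤ) * Csum m M := by
      rw [← Finset.sum_range_reflect (fun i => psi m (2 * i + 1) * (2 * (i : ℤ) + 1)) M]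
      have h4 : ∀ i ∈ range M,
          psi m (2 * (M - 1 - i) + 1) * (2 * ((M - 1 - i : ℕ) : ℤ) + 1)
          = 2 * (psi m (i + 1) * ((i : ℤ) + 1)) - (m : ℤ) * psi m (i + 1) := by
        intro i hi
        have hiM : i < M := Finset.mem_range.mp hi
        have hidx : 2 * (M - 1 - i) + 1 = m - 2 * (i + 1) := by omega
        have hcast : ((M - 1 - i : ℕ) : ℤ) = (M : ℤ) - 1 - i := by omega
        have hsub : psi m (m - 2 * (i + 1)) = - psi m (i + 1) := by
          rw [psi_reflect hm8 (by omega), psi_two_mul hm8]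
        rw [hidx, hcast, hsub, hmZ]
        ring
      rw [Finset.sum_congr rfl h4, Finset.sum_sub_distrib, ← Finset.mul_sum,
        ← Finset.mul_sum]
      unfold GAsum Csum
      ring
    rw [hod]
    unfold GAsum
    ring
  have : 2 * GAsum m M = 4 * GAsum m M := by
    have := halpha.symm.trans hbeta
    linarith
  linarith

lemma g2_eq (hm8 : m % 8 = 7) (M K : ℕ) (hM : m = 2 * M + 1) (hK : M = 2 * K + 1) :
    G2sum m M = GAsum m M - 4 * Esum m K := by
  have hW : ∑ i ∈ range M, (1 - (-1 : ℤ) ^ i) * psi m (i + 1) * ((i : ℤ) + 1)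
      = 4 * Esum m K := by
    rw [hK, sum_range_succ]
    have hlast : (1 - (-1 : ℤ) ^ (2 * K)) * psi m (2 * K + 1) * (((2 * K : ℕ) : ℤ) + 1) = 0 := by
      rw [Even.neg_one_pow (even_two_mul K)]; ring
    rw [hlast, add_zero,
      sum_range_two_mul (fun i => (1 - (-1 : ℤ) ^ i) * psi m (i + 1) * ((i : ℤ) + 1))]
    have h5 : ∀ i ∈ range K,
        ((1 - (-1 : ℤ) ^ (2 * i)) * psi m (2 * i + 1) * (((2 * i : ℕ) : ℤ) + 1)
          + (1 - (-1 : ℤ) ^ (2 * i + 1)) * psi m ((2 * i + 1) + 1) * (((2 * i + 1 : ℕ) : ℤ) + 1))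
        = 4 * (psi m (i + 1) * ((i : ℤ) + 1)) := by
      intro i _
      have hev : (-1 : ℤ) ^ (2 * i) = 1 := Even.neg_one_pow (even_two_mul i)
      have hodd : (-1 : ℤ) ^ (2 * i + 1) = -1 := by
        rw [pow_succ, hev]; ring
      have hidx : (2 * i + 1) + 1 = 2 * (i + 1) := by ring
      rw [hev, hodd, hidx, psi_two_mul hm8]
      push_cast
      ring
    rw [Finset.sum_congr rfl h5, ← Finset.mul_sum, Esum]
  have : G2sum m M = GAsum m M
      - ∑ i ∈ range M, (1 - (-1 : ℤ) ^ i) * psi m (i + 1) * ((i : ℤ) + 1) := by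
    unfold G2sum GAsum
    rw [← Finset.sum_sub_distrib]
    apply Finset.sum_congr rfl
    intro i _
    ring
  rw [this, hW]

theorem main_identity (hm8 : m % 8 = 7) (M K : ℕ) (hM : m = 2 * M + 1) (hK : M = 2 * K + 1) :
    Ssum m = 64 * (m : ℤ) * Esum m K := by
  rw [step1 hm8, step2 hm8, step3 hm8 M hM, g2_eq hm8 M K hM hK, gall_zero hm8 M hM]
  ring


lemma cnt_odd_range (K : ℕ) :
    ((range K).filter (fun i => Odd (i + 1))).card = (K + 1) / 2 := by
  induction K with
  | zero => simp
  | succ K ih =>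
    rw [Finset.range_add_one, Finset.filter_insert]
    by_cases h : Odd (K + 1)
    · rw [if_pos h, Finset.card_insert_of_notMem (by simp), ih]
      rw [Nat.odd_iff] at h
      omega
    · rw [if_neg h, ih]
      rw [Nat.not_odd_iff_even, Nat.even_iff] at h
      omega

lemma cnt_odd_dvd (p K : ℕ) (hp : Odd p) :
    ((range K).filter (fun i => Odd (i + 1) ∧ p ∣ (i + 1))).card
      = ((range (K / p)).filter (fun j => Odd (j + 1))).card := by
  have hp1 : 0 < p := by rcases hp with ⟨t, ht⟩; omega
  apply Finset.card_bij' (fun a _ => (a + 1) / p - 1) (fun b _ => p * (b + 1) - 1)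
  · intro a ha
    simp only [Finset.mem_filter, Finset.mem_range] at ha ⊢
    obtain ⟨haK, hodd, c, hc⟩ := ha
    have hcomm : c * p = p * c := Nat.mul_comm c p
    have hc1 : 1 ≤ c := by
      rcases Nat.eq_zero_or_pos c with h0 | h0
      · rw [h0, Nat.mul_zero] at hc; omega
      · exact h0
    rw [hc, Nat.mul_div_cancel_left c hp1]
    constructor
    · have h1 : c ≤ K / p := (Nat.le_div_iff_mul_le hp1).mpr (by omega)
      omega
    · have : Odd (p * c) := hc ▸ hodd
      rcases Nat.odd_mul.mp this with ⟨_, hco⟩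
      have hcc : c - 1 + 1 = c := by omega
      rw [hcc]; exact hco
  · intro b hb
    simp only [Finset.mem_filter, Finset.mem_range] at hb ⊢
    obtain ⟨hbK, hodd⟩ := hb
    have hble : b + 1 ≤ K / p := hbK
    have hmul : (b + 1) * p ≤ K := (Nat.le_div_iff_mul_le hp1).mp hble
    have hmul' : p * (b + 1) ≤ K := by rw [Nat.mul_comm p (b + 1)]; exact hmul
    have hpos : 0 < p * (b + 1) := Nat.mul_pos hp1 (Nat.succ_pos b)
    refine ⟨by omega, ?_, ⟨b + 1, by omega⟩⟩
    have hre : p * (b + 1) - 1 + 1 = p * (b + 1) := by omega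
    rw [hre]
    exact Nat.odd_mul.mpr ⟨hp, hodd⟩
  · intro a ha
    simp only [Finset.mem_filter, Finset.mem_range] at ha
    obtain ⟨haK, hodd, c, hc⟩ := ha
    have hc1 : 1 ≤ c := by
      rcases Nat.eq_zero_or_pos c with h0 | h0
      · rw [h0, Nat.mul_zero] at hc; omega
      · exact h0
    rw [hc, Nat.mul_div_cancel_left c hp1]
    have hcc : c - 1 + 1 = c := by omega
    rw [hcc]
    omega
  · intro b hb
    simp only [Finset.mem_filter, Finset.mem_range] at hb
    have hpos : 0 < p * (b + 1) := Nat.mul_pos hp1 (Nat.succ_pos b)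
    have hre : p * (b + 1) - 1 + 1 = p * (b + 1) := by omega
    rw [hre, Nat.mul_div_cancel_left _ hp1]
    omega

lemma count_partition (p₁ p₂ K : ℕ) (hp₁ : p₁.Prime) (hp₂ : p₂.Prime) (hne : p₁ ≠ p₂)
    (hK : K < p₁ * p₂) :
    ((range K).filter (fun i => Odd (i + 1))).card
      = ((range K).filter (fun i => Odd (i + 1) ∧ Nat.Coprime (i + 1) (p₁ * p₂))).card
        + ((range K).filter (fun i => Odd (i + 1) ∧ p₁ ∣ (i + 1))).card
        + ((range K).filter (fun i => Odd (i + 1) ∧ p₂ ∣ (i + 1))).card := by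
  rw [Finset.card_filter, Finset.card_filter, Finset.card_filter, Finset.card_filter,
    ← Finset.sum_add_distrib, ← Finset.sum_add_distrib]
  apply Finset.sum_congr rfl
  intro i hi
  have hiK : i < K := Finset.mem_range.mp hi
  by_cases hodd : Odd (i + 1)
  · by_cases h1 : p₁ ∣ (i + 1)
    · by_cases h2 : p₂ ∣ (i + 1)
      · exfalso
        have hcp : Nat.Coprime p₁ p₂ := (Nat.coprime_primes hp₁ hp₂).mpr hne
        have hdvd : p₁ * p₂ ∣ (i + 1) := Nat.Coprime.mul_dvd_of_dvd_of_dvd hcp h1 h2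
        have := Nat.le_of_dvd (by omega) hdvd
        omega
      · have hnc : ¬ Nat.Coprime (i + 1) (p₁ * p₂) := by
          intro hcop
          have : Nat.Coprime (i + 1) p₁ := Nat.Coprime.coprime_dvd_right ⟨p₂, rfl⟩ hcop
          exact (Nat.Prime.coprime_iff_not_dvd hp₁).mp (Nat.coprime_comm.mp this) h1
        rw [if_pos hodd, if_neg (fun hh => hnc hh.2), if_pos ⟨hodd, h1⟩,
          if_neg (fun hh => h2 hh.2)]
    · by_cases h2 : p₂ ∣ (i + 1)
      · have hnc : ¬ Nat.Coprime (i + 1) (p₁ * p₂) := by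
          intro hcop
          have : Nat.Coprime (i + 1) p₂ := Nat.Coprime.coprime_dvd_right ⟨p₁, mul_comm _ _⟩ hcop
          exact (Nat.Prime.coprime_iff_not_dvd hp₂).mp (Nat.coprime_comm.mp this) h2
        rw [if_pos hodd, if_neg (fun hh => hnc hh.2), if_neg (fun hh => h1 hh.2),
          if_pos ⟨hodd, h2⟩]
      · have hc : Nat.Coprime (i + 1) (p₁ * p₂) := by
          apply Nat.Coprime.mul_right
          · exact Nat.coprime_comm.mp ((Nat.Prime.coprime_iff_not_dvd hp₁).mpr h1)
          · exact Nat.coprime_comm.mp ((Nat.Prime.coprime_iff_not_dvd hp₂).mpr h2)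
        rw [if_pos hodd, if_pos ⟨hodd, hc⟩, if_neg (fun hh => h1 hh.2),
          if_neg (fun hh => h2 hh.2)]
  · rw [if_neg hodd, if_neg (fun hh => hodd hh.1), if_neg (fun hh => hodd hh.1),
      if_neg (fun hh => hodd hh.1)]

lemma jac_mod_two (m b : ℕ) (hm : m ≠ 0) :
    ((psi m b : ℤ) : ZMod 2) * ((b : ℕ) : ZMod 2)
      = if Odd b ∧ Nat.Coprime b m then 1 else 0 := by
  haveI : NeZero m := ⟨hm⟩
  by_cases hc : Nat.Coprime b m
  · have hψ : ((psi m b : ℤ) : ZMod 2) = 1 := by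
      rcases jacobiSym.trichotomy (b : ℤ) m with h | h | h
      · exfalso
        have := jacobiSym.eq_zero_iff_not_coprime.mp h
        rw [Int.gcd_natCast_natCast] at this
        exact this hc
      · rw [psi, h]; exact Int.cast_one
      · rw [psi, h, Int.cast_neg, Int.cast_one]; decide
    rw [hψ, one_mul]
    by_cases ho : Odd b
    · rw [if_pos ⟨ho, hc⟩]
      rw [Nat.odd_iff] at ho
      rw [show ((b : ℕ) : ZMod 2) = ((b % 2 : ℕ) : ZMod 2) from (ZMod.natCast_mod b 2).symm, ho, Nat.cast_one]
    · rw [if_neg (by tauto)]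
      rw [Nat.not_odd_iff_even, Nat.even_iff] at ho
      rw [show ((b : ℕ) : ZMod 2) = ((b % 2 : ℕ) : ZMod 2) from (ZMod.natCast_mod b 2).symm, ho, Nat.cast_zero]
  · have hψ : psi m b = 0 := by
      apply jacobiSym.eq_zero_iff_not_coprime.mpr
      rw [Int.gcd_natCast_natCast]
      exact hc
    rw [hψ, if_neg (by tauto)]
    push_cast
    ring

lemma esum_odd (p₁ p₂ : ℕ) (hp₁ : p₁.Prime) (hp₂ : p₂.Prime)
    (h₁ : p₁ % 8 = 3) (h₂ : p₂ % 8 = 5) (K : ℕ) (hK4 : p₁ * p₂ = 4 * K + 3) :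
    Odd (Esum (p₁ * p₂) K) := by
  obtain ⟨k, hk⟩ : ∃ k, p₁ = 8 * k + 3 := ⟨p₁ / 8, by omega⟩
  obtain ⟨l, hl⟩ : ∃ l, p₂ = 8 * l + 5 := ⟨p₂ / 8, by omega⟩
  obtain ⟨q, hq⟩ : ∃ q, k * l = q := ⟨k * l, rfl⟩
  have hm : p₁ * p₂ = 64 * q + 40 * k + 24 * l + 15 := by
    rw [hk, hl, ← hq]; ring
  have hKval : K = 16 * q + 10 * k + 6 * l + 3 := by omega
  have hne : p₁ ≠ p₂ := by omega
  -- division values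
  have hd1 : K / p₁ = 2 * l + 1 := by
    have hKrw : K = 2 * k + (2 * l + 1) * p₁ := by
      rw [hk]
      have : (2 * l + 1) * (8 * k + 3) = 16 * q + 8 * k + 6 * l + 3 := by rw [← hq]; ring
      omega
    rw [hKrw, Nat.add_mul_div_right _ _ (by omega : 0 < p₁), Nat.div_eq_of_lt (by omega)]
    omega
  have hd2 : K / p₂ = 2 * k := by
    have hKrw : K = (6 * l + 3) + (2 * k) * p₂ := by
      rw [hl]
      have : (2 * k) * (8 * l + 5) = 16 * q + 10 * k := by rw [← hq]; ring
      omega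
    rw [hKrw, Nat.add_mul_div_right _ _ (by omega : 0 < p₂), Nat.div_eq_of_lt (by omega)]
    omega
  -- the count
  have hcount := count_partition p₁ p₂ K hp₁ hp₂ hne (by omega)
  rw [cnt_odd_range, cnt_odd_dvd p₁ K (by rw [Nat.odd_iff]; omega),
    cnt_odd_dvd p₂ K (by rw [Nat.odd_iff]; omega), cnt_odd_range, cnt_odd_range,
    hd1, hd2] at hcount
  set A := ((range K).filter (fun i => Odd (i + 1) ∧ Nat.Coprime (i + 1) (p₁ * p₂))) with hA
  have hcardA : A.card = 2 * (4 * q + 2 * k + l) + 1 := by omega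
  -- now compute Esum mod 2
  have hcast : ((Esum (p₁ * p₂) K : ℤ) : ZMod 2) = 1 := by
    rw [Esum]
    push_cast
    have hterm : ∀ i ∈ range K,
        ((psi (p₁ * p₂) (i + 1) : ℤ) : ZMod 2) * ((i : ZMod 2) + 1)
          = if Odd (i + 1) ∧ Nat.Coprime (i + 1) (p₁ * p₂) then 1 else 0 := by
      intro i _
      have := jac_mod_two (p₁ * p₂) (i + 1) (by omega)
      rw [← this]
      push_cast
      ring
    rw [Finset.sum_congr rfl hterm, Finset.sum_boole, ← hA, hcardA]
    push_cast
    have h2 : ((2 : ℕ) : ZMod 2) = 0 := by decide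
    push_cast at h2
    rw [h2]
    ring
  by_contra hcon
  rw [Int.not_odd_iff_even] at hcon
  have : ((Esum (p₁ * p₂) K : ℤ) : ZMod 2) = 0 :=
    (ZMod.intCast_zmod_eq_zero_iff_dvd _ 2).mpr (by exact_mod_cast hcon.two_dvd)
  rw [hcast] at this
  exact one_ne_zero this


end BS16

/-- (Browkin–Schinzel) For primes `p₁ ≡ 3 (mod 8)` and `p₂ ≡ 5 (mod 8)` and `D = 4 p₁ p₂`,
the 2-adic valuation of `L(χ_D, -1) = -(1/(2D)) ∑_{a=1}^{D} χ_D(a) a²` is at least `3`,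
where `χ_D(a)` is the Jacobi symbol `(p₁ p₂ / a)` for odd `a` and `0` for even `a`. -/
theorem stmt16 (p₁ p₂ : ℕ) (hp₁ : p₁.Prime) (hp₂ : p₂.Prime)
    (hmod₁ : p₁ % 8 = 3) (hmod₂ : p₂ % 8 = 5) :
    (3 : ℤ) ≤ padicValRat 2 ((1 / (2 * ((4 * (p₁ * p₂) : ℕ) : ℚ))) *
      ∑ a ∈ Finset.Icc 1 (4 * (p₁ * p₂)),
        (if Odd a then ((jacobiSym (p₁ * p₂) a : ℤ) : ℚ) else 0) * (a : ℚ) ^ 2) := by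
  have hm8 : (p₁ * p₂) % 8 = 7 := by rw [Nat.mul_mod, hmod₁, hmod₂]
  obtain ⟨K, hK4⟩ : ∃ K, p₁ * p₂ = 4 * K + 3 := ⟨(p₁ * p₂) / 4, by omega⟩
  have hmain := BS16.main_identity hm8 (2 * K + 1) K (by omega) rfl
  have hEodd := BS16.esum_odd p₁ p₂ hp₁ hp₂ hmod₁ hmod₂ K hK4
  set E : ℤ := BS16.Esum (p₁ * p₂) K with hE
  -- convert the Icc sum to the range sum
  have hIcc : (∑ a ∈ Finset.Icc 1 (4 * (p₁ * p₂)),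
      (if Odd a then ((jacobiSym (p₁ * p₂) a : ℤ) : ℚ) else 0) * (a : ℚ) ^ 2)
      = ((BS16.Ssum (p₁ * p₂) : ℤ) : ℚ) := by
    rw [← Finset.Ico_add_one_right_eq_Icc, Finset.sum_Ico_eq_sum_range]
    rw [BS16.Ssum, Int.cast_sum, show 4 * (p₁ * p₂) + 1 - 1 = 4 * (p₁ * p₂) from rfl]
    apply Finset.sum_congr rfl
    intro i _
    unfold BS16.chi
    by_cases h : Odd (1 + i)
    · rw [if_pos h, if_pos h]
      push_cast
      ring
    · rw [if_neg h, if_neg h]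
      push_cast
      ring
  rw [hIcc, hmain]
  have hm0 : ((p₁ * p₂ : ℕ) : ℚ) ≠ 0 := by
    have : 0 < p₁ * p₂ := by omega
    exact_mod_cast this.ne'
  have hval : (1 / (2 * ((4 * (p₁ * p₂) : ℕ) : ℚ))) * ((64 * ((p₁ * p₂ : ℕ) : ℤ) * E : ℤ) : ℚ)
      = ((8 * E : ℤ) : ℚ) := by
    push_cast
    push_cast at hm0
    have hp1 : (p₁ : ℚ) ≠ 0 := left_ne_zero_of_mul hm0
    have hp2 : (p₂ : ℚ) ≠ 0 := right_ne_zero_of_mul hm0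
    field_simp
    ring
  rw [hval, padicValRat.of_int]
  have hE0 : E ≠ 0 := by
    intro h
    rw [h, Int.odd_iff] at hEodd
    omega
  have h8E : padicValInt 2 (8 * E) = 3 := by
    unfold padicValInt
    rw [Int.natAbs_mul]
    rw [padicValNat.mul (by norm_num) (Int.natAbs_ne_zero.mpr hE0)]
    have h1 : (8 : ℤ).natAbs = 2 ^ 3 := rfl
    rw [h1, padicValNat.prime_pow]
    have h2 : padicValNat 2 E.natAbs = 0 := by
      apply padicValNat.eq_zero_of_not_dvd
      have := Int.natAbs_odd.mpr hEodd
      rw [Nat.odd_iff] at this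
      omega
    rw [h2]
  rw [h8E]
  norm_num
end

section
/- Let D > 1 be a squarefree integer all of whose prime divisors are congruent to 1 modulo 4. Then there exist integers x, y, z, not all zero, with x² − D·y² = −z²; equivalently, −1 is a norm from the real quadratic field ℚ(√D), i.e. there exist rational numbers x, y with x² − D·y² = −1. -/
/-- If `D > 1` is squarefree and every prime divisor of `D` is `≡ 1 (mod 4)`, then there are
integers `x, y, z`, not all zero, with `x² - D y² = -z²`; equivalently `-1` is a norm from
`ℚ(√D)`, i.e. there are rationals `x, y` with `x² - D y² = -1`. -/
theorem stmt17 (D : ℕ) (hD : 1 < D) (hsf : Squarefree D)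
    (hmod : ∀ p : ℕ, p.Prime → p ∣ D → p % 4 = 1) :
    (∃ x y z : ℤ, ¬(x = 0 ∧ y = 0 ∧ z = 0) ∧ x ^ 2 - (D : ℤ) * y ^ 2 = -z ^ 2) ∧
    (∃ x y : ℚ, x ^ 2 - (D : ℚ) * y ^ 2 = -1) := by
  obtain ⟨a, b, hab⟩ : ∃ x y : ℕ, D = x ^ 2 + y ^ 2 := by
    rw [Nat.eq_sq_add_sq_iff]
    intro q hq hq3
    rcases Nat.eq_zero_or_pos (padicValNat q D) with h | h
    · simp [h]
    · exfalso
      have hdvd : q ∣ D := by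
        haveI : Fact q.Prime := ⟨Nat.prime_of_mem_primeFactors hq⟩
        exact dvd_of_one_le_padicValNat h
      have := hmod q (Nat.prime_of_mem_primeFactors hq) hdvd
      omega
  have hb : b ≠ 0 := by
    intro h
    subst h
    have : a * a ∣ D := ⟨1, by rw [hab]; ring⟩
    have := Nat.isUnit_iff.mp (hsf a this)
    subst this
    simp at hab
    omega
  have hbz : (b : ℤ) ≠ 0 := by exact_mod_cast hb
  have habz : (D : ℤ) = (a : ℤ) ^ 2 + (b : ℤ) ^ 2 := by exact_mod_cast hab
  constructor
  · exact ⟨a, 1, b, fun h => one_ne_zero h.2.1, by rw [habz]; ring⟩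
  · refine ⟨(a : ℚ) / b, 1 / b, ?_⟩
    have hbq : (b : ℚ) ≠ 0 := by exact_mod_cast hb
    have habq : (D : ℚ) = (a : ℚ) ^ 2 + (b : ℚ) ^ 2 := by exact_mod_cast hab
    field_simp
    linarith [habq]
end

section
/- For n ≥ 1, let B_n be the n × n matrix over the field 𝔽₂ with two elements whose diagonal entries are all 0 and whose off-diagonal entries are all 1. Then the rank of B_n over 𝔽₂ equals n − 1 if n is odd, and equals n if n is even. -/
/-!
Writing `B = J - I` with `J` the all-ones matrix, `B x = (∑ j, x j) • 1 - x`, so the kernel of `B`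
consists of the constant vectors `c • 1` with `n • c = c`. Over `𝔽₂` this condition is vacuous
when `n` is odd (the kernel is the line through `1`) and forces `c = 0` when `n` is even
(the kernel is trivial); rank–nullity gives the rank.
-/

open Matrix Module

namespace Matrix

theorem rank_add_finrank_ker_mulVecLin {m n K : Type*} [Fintype m] [Fintype n] [Field K]
    (A : Matrix m n K) : A.rank + finrank K (LinearMap.ker A.mulVecLin) = Fintype.card n :=
  A.mulVecLin.finrank_range_add_finrank_ker.trans (finrank_fintype_fun_eq_card K)

variable {ι R K : Type*} [Fintype ι] [DecidableEq ι]

def offDiagOnes (ι R : Type*) [DecidableEq ι] [Zero R] [One R] : Matrix ι ι R :=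
  of fun i j => if i = j then 0 else 1

theorem offDiagOnes_mulVec_apply [Ring R] (x : ι → R) (i : ι) :
    (offDiagOnes ι R *ᵥ x) i = (∑ j, x j) - x i := by
  have hterm : ∀ j, offDiagOnes ι R i j * x j = x j - if i = j then x j else 0 := by
    intro j
    simp only [offDiagOnes, of_apply]
    split_ifs <;> simp
  simp only [mulVec, dotProduct, hterm, Finset.sum_sub_distrib, Finset.sum_ite_eq,
    Finset.mem_univ, if_true]

theorem mem_ker_offDiagOnes_iff [CommRing R] {x : ι → R} :
    x ∈ LinearMap.ker (offDiagOnes ι R).mulVecLin ↔ ∀ i, x i = ∑ j, x j := by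
  simp only [LinearMap.mem_ker, funext_iff, mulVecLin_apply, offDiagOnes_mulVec_apply,
    Pi.zero_apply, sub_eq_zero, eq_comm]

theorem ker_offDiagOnes_eq_bot [CommRing R] [NoZeroDivisors R] (h : (Fintype.card ι : R) ≠ 1) :
    LinearMap.ker (offDiagOnes ι R).mulVecLin = ⊥ := by
  refine (Submodule.eq_bot_iff _).2 fun x hx => ?_
  rw [mem_ker_offDiagOnes_iff] at hx
  set s := ∑ j, x j
  have hs : s = Fintype.card ι * s := by
    calc s = ∑ _j : ι, s := Finset.sum_congr rfl fun j _ => hx j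
      _ = Fintype.card ι * s := by simp [Finset.sum_const, nsmul_eq_mul]
  have hs0 : s = 0 := by
    have : ((Fintype.card ι : R) - 1) * s = 0 := by rw [sub_mul, ← hs, one_mul, sub_self]
    exact (mul_eq_zero.1 this).resolve_left (sub_ne_zero.2 h)
  funext i
  rw [hx i, hs0, Pi.zero_apply]

theorem ker_offDiagOnes_eq_span [CommRing R] (h : (Fintype.card ι : R) = 1) :
    LinearMap.ker (offDiagOnes ι R).mulVecLin = R ∙ (1 : ι → R) := by
  ext x
  rw [mem_ker_offDiagOnes_iff, Submodule.mem_span_singleton]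
  constructor
  · intro hx
    exact ⟨∑ j, x j, funext fun i => by simp [hx i]⟩
  · rintro ⟨c, rfl⟩ i
    simp [Finset.sum_const, nsmul_eq_mul, h]

theorem rank_offDiagOnes_of_card_ne_one [Field K] (h : (Fintype.card ι : K) ≠ 1) :
    (offDiagOnes ι K).rank = Fintype.card ι := by
  have hker := (offDiagOnes ι K).rank_add_finrank_ker_mulVecLin
  rwa [ker_offDiagOnes_eq_bot h, finrank_bot, add_zero] at hker

theorem rank_offDiagOnes_of_card_eq_one [Field K] (h : (Fintype.card ι : K) = 1) :
    (offDiagOnes ι K).rank = Fintype.card ι - 1 := by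
  have : Nonempty ι := Fintype.card_pos_iff.1 <| Nat.pos_of_ne_zero fun h0 => by simp [h0] at h
  have hker := (offDiagOnes ι K).rank_add_finrank_ker_mulVecLin
  rw [ker_offDiagOnes_eq_span h, finrank_span_singleton one_ne_zero] at hker
  omega

end Matrix

theorem stmt18_general (n : ℕ) :
    (Matrix.of (fun i j : Fin n => if i = j then (0 : ZMod 2) else 1)).rank
      = if Odd n then n - 1 else n := by
  change (offDiagOnes (Fin n) (ZMod 2)).rank = _
  have hcard : (Fintype.card (Fin n) : ZMod 2) = 1 ↔ Odd n := by
    rw [Fintype.card_fin, ZMod.natCast_eq_one_iff_odd]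
  split_ifs with hn
  · rw [rank_offDiagOnes_of_card_eq_one (hcard.2 hn), Fintype.card_fin]
  · rw [rank_offDiagOnes_of_card_ne_one (mt hcard.1 hn), Fintype.card_fin]

/-- The `n × n` matrix over `𝔽₂` with zero diagonal and all off-diagonal entries equal to `1`
has rank `n - 1` if `n` is odd and rank `n` if `n` is even. -/
theorem stmt18 (n : ℕ) (hn : 1 ≤ n) :
    (Matrix.of (fun i j : Fin n => if i = j then (0 : ZMod 2) else 1)).rank
      = if Odd n then n - 1 else n :=
  stmt18_general n
end

section
/- Let n ≥ 2 and let ℓ₁, …, ℓ_n be distinct primes with ℓ₁ ≡ 3 (mod 8) and ℓ_i ≡ 5 (mod 8) for 2 ≤ i ≤ n. Set m = ℓ₁⋯ℓ_n and let F = ℚ(√m) with ring of integers O_F. Then every prime ideal of O_F lying above 2 is not principal. (Note that m ≡ 3 (mod 4), so 2 is ramified in F and there is a unique such prime ideal 𝔭, with 𝔭² = 2·O_F.) -/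
lemma sq19_int_of_mul_sq {m : ℕ} (hm : Squarefree m) (q : ℚ) (z : ℤ)
    (h : (m:ℚ) * q^2 = z) : ∃ b : ℤ, (b:ℚ) = q := by
  have hd : (q.den : ℤ)^2 ∣ (m : ℤ) * q.num^2 := by
    refine ⟨z, ?_⟩
    have hq : (q.num : ℚ) = q * q.den := (Rat.mul_den_eq_num q).symm
    have : ((m : ℤ) * q.num^2 : ℚ) = ((q.den:ℤ)^2 * z : ℚ) := by
      push_cast
      rw [hq, ← h]
      ring
    exact_mod_cast this
  have hcop : (Nat.Coprime (q.den^2) (q.num.natAbs^2)) :=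
    (Nat.coprime_comm.mp q.reduced).pow _ _
  have hd' : q.den^2 ∣ m * q.num.natAbs^2 := by
    have := Int.natAbs_dvd_natAbs.mpr hd
    simpa [Int.natAbs_mul, Int.natAbs_pow] using this
  have hdm : q.den^2 ∣ m := (Nat.Coprime.dvd_of_dvd_mul_right hcop hd')
  have : IsUnit q.den := hm q.den (by simpa [pow_two] using hdm)
  have hden : q.den = 1 := Nat.isUnit_iff.mp this
  exact ⟨q.num, by exact_mod_cast (Rat.den_eq_one_iff q).mp hden⟩

lemma sq19_no_rat_sqrt {m : ℕ} (hm : Squarefree m) (hm1 : 1 < m) (q : ℚ) :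
    q^2 ≠ (m : ℚ) := by
  intro h
  obtain ⟨b, hb⟩ := sq19_int_of_mul_sq squarefree_one q m (by push_cast; rw [one_mul, h])
  have hb2 : (b^2 : ℚ) = (m : ℚ) := by rw [← h, hb]
  have hb2' : b.natAbs * b.natAbs = m := by
    have : b^2 = (m : ℤ) := by exact_mod_cast hb2
    have := congrArg Int.natAbs this
    simpa [pow_two, Int.natAbs_mul] using this
  have : IsUnit b.natAbs := hm b.natAbs ⟨1, by rw [mul_one]; exact hb2'.symm⟩
  rw [Nat.isUnit_iff] at this
  rw [this] at hb2'
  omega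

lemma sq19_squarefree_prod {n : ℕ} (ℓ : Fin n → ℕ) (hprime : ∀ i, (ℓ i).Prime)
    (hinj : Function.Injective ℓ) : Squarefree (∏ i, ℓ i) := by
  have hpos : ∏ i, ℓ i ≠ 0 := Finset.prod_ne_zero_iff.mpr fun i _ => (hprime i).ne_zero
  rw [Nat.squarefree_iff_factorization_le_one hpos]
  intro p
  by_cases hpp : p.Prime
  · rw [Nat.factorization_prod (fun i _ => (hprime i).ne_zero)]
    simp only [Finset.sum_apply']
    have hterm : ∀ i, (ℓ i).factorization p = if ℓ i = p then 1 else 0 := by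
      intro i
      by_cases h : ℓ i = p
      · rw [if_pos h, ← h, (hprime i).factorization_self]
      · rw [if_neg h, Nat.factorization_eq_zero_iff]
        right; left
        intro hdvd
        exact h ((Nat.prime_dvd_prime_iff_eq hpp (hprime i)).mp hdvd).symm
    calc ∑ i, (ℓ i).factorization p = ∑ i, if ℓ i = p then 1 else 0 := by
          exact Finset.sum_congr rfl (fun i _ => hterm i)
      _ = (Finset.univ.filter (fun i => ℓ i = p)).card := by
          rw [Finset.sum_boole]; simp
      _ ≤ 1 := by
          apply Finset.card_le_one.mpr
          intro a ha b hb
          simp only [Finset.mem_filter] at ha hb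
          exact hinj (ha.2.trans hb.2.symm)
  · rw [Nat.factorization_eq_zero_of_not_prime _ hpp]
    omega

lemma sq19_cast_eq_of_mod {k a r : ℕ} (h : a % k = r) : (a : ZMod k) = (r : ZMod k) := by
  rw [← Nat.mod_add_div a k, h]
  push_cast
  simp [ZMod.natCast_self]

lemma sq19_mod4 {n : ℕ} (hn : 2 ≤ n) (ℓ : Fin n → ℕ)
    (hmod1 : ∀ i : Fin n, (i : ℕ) = 0 → ℓ i % 8 = 3)
    (hmod5 : ∀ i : Fin n, (i : ℕ) ≠ 0 → ℓ i % 8 = 5) :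
    (∏ i, ℓ i) % 4 = 3 := by
  have : NeZero n := ⟨by omega⟩
  have hz : ((∏ i, ℓ i : ℕ) : ZMod 4) = 3 := by
    push_cast
    rw [← Finset.mul_prod_erase Finset.univ _ (Finset.mem_univ (0 : Fin n))]
    have h0 : ((ℓ 0 : ℕ) : ZMod 4) = 3 := by
      have := hmod1 0 (by simp [Fin.val_zero])
      have h4 : ℓ 0 % 4 = 3 := by omega
      exact sq19_cast_eq_of_mod h4
    have h1 : ∀ i ∈ Finset.univ.erase (0 : Fin n), ((ℓ i : ℕ) : ZMod 4) = 1 := by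
      intro i hi
      have hi0 : (i : ℕ) ≠ 0 := by
        intro h
        exact (Finset.mem_erase.mp hi).1 (Fin.ext (by simpa using h))
      have := hmod5 i hi0
      have h4 : ℓ i % 4 = 1 := by omega
      exact (sq19_cast_eq_of_mod h4).trans (by norm_num)
    rw [h0, Finset.prod_congr rfl h1]
    simp
  have hlt : (∏ i, ℓ i) % 4 < 4 := Nat.mod_lt _ (by norm_num)
  have := sq19_cast_eq_of_mod (rfl : (∏ i, ℓ i) % 4 = (∏ i, ℓ i) % 4)
  have h3 : (((∏ i, ℓ i) % 4 : ℕ) : ZMod 4) = 3 := by rw [← this]; exact hz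
  set r := (∏ i, ℓ i) % 4 with hr
  clear_value r
  interval_cases r <;> revert h3 <;> decide

lemma sq19_even_even {T S M : ℤ} (hM : M % 4 = 3) (h : (4:ℤ) ∣ T^2 - M * S^2) :
    2 ∣ T ∧ 2 ∣ S := by
  have h4 : ((T : ZMod 4))^2 = 3 * (S : ZMod 4)^2 := by
    have h0 := (ZMod.intCast_zmod_eq_zero_iff_dvd _ 4).mpr h
    push_cast at h0
    have hM4 : (M : ZMod 4) = 3 := by
      obtain ⟨k, hk⟩ : ∃ k, M = 4*k + 3 := ⟨M/4, by omega⟩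
      rw [hk]
      push_cast
      rw [show ((4:ZMod 4)) = 0 by decide]
      ring
    rw [hM4] at h0
    linear_combination h0
  have key : ∀ x y : ZMod 4, x^2 = 3 * y^2 →
      (ZMod.cast x : ZMod 2) = 0 ∧ (ZMod.cast y : ZMod 2) = 0 := by decide
  obtain ⟨h1, h2⟩ := key _ _ h4
  rw [ZMod.cast_intCast (by norm_num : (2:ℕ) ∣ 4)] at h1 h2
  exact ⟨by exact_mod_cast (ZMod.intCast_zmod_eq_zero_iff_dvd _ 2).mp h1,
    by exact_mod_cast (ZMod.intCast_zmod_eq_zero_iff_dvd _ 2).mp h2⟩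
section
variable {F : Type*} [Field F] [NumberField F]

lemma sq19_li {m : ℕ} (hsf : Squarefree m) (hm1 : 1 < m) {θ : F} (hθ : θ^2 = (m:F)) :
    LinearIndependent ℚ ![1, θ] := by
  rw [linearIndependent_fin2]
  constructor
  · show θ ≠ 0
    intro h
    rw [h, zero_pow (by norm_num)] at hθ
    exact Nat.cast_ne_zero.mpr (by omega : m ≠ 0) hθ.symm
  · intro a ha
    simp only [Matrix.cons_val_one, Matrix.head_cons, Matrix.cons_val_zero] at ha
    have ha0 : a ≠ 0 := by rintro rfl; simp at ha
    have hθa : θ = a⁻¹ • (1:F) := by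
      rw [← ha, smul_smul, inv_mul_cancel₀ ha0, one_smul]
    have h1 : algebraMap ℚ F (a⁻¹^2) = algebraMap ℚ F (m:ℚ) := by
      rw [map_pow, Algebra.algebraMap_eq_smul_one, ← hθa, hθ]
      push_cast
      rfl
    exact sq19_no_rat_sqrt hsf hm1 a⁻¹ ((algebraMap ℚ F).injective h1)

lemma sq19_repr {θ : F} (B : Module.Basis (Fin 2) ℚ F) (hB : ⇑B = ![1, θ])
    (a b : ℚ) (i : Fin 2) :
    B.repr (a • (1:F) + b • θ) i = ![a, b] i := by
  have h1 : (1:F) = B 0 := by rw [hB]; simp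
  have h2 : θ = B 1 := by rw [hB]; simp
  rw [h1, h2, map_add, map_smul, map_smul, B.repr_self, B.repr_self]
  fin_cases i <;> simp

lemma sq19_lmm {m : ℕ} {θ : F} (hθ : θ^2 = (m:F)) (B : Module.Basis (Fin 2) ℚ F) (hB : ⇑B = ![1, θ])
    (a b : ℚ) :
    Algebra.leftMulMatrix B (a • (1:F) + b • θ) = !![a, (m:ℚ)*b; b, a] := by
  have hmF : (m : F) = ((m:ℚ)) • (1:F) := by
    rw [Algebra.smul_def, mul_one]
    push_cast
    rfl
  have e0 : (a • (1:F) + b • θ) * B 0 = a • (1:F) + b • θ := by rw [hB]; simp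
  have e1 : (a • (1:F) + b • θ) * B 1 = ((m:ℚ)*b) • (1:F) + a • θ := by
    rw [hB]
    simp only [Matrix.cons_val_one, Matrix.head_cons, Matrix.cons_val_zero]
    rw [add_mul, smul_mul_assoc, smul_mul_assoc, one_mul, ← pow_two, hθ, hmF,
      smul_smul, mul_comm b]
    ring_nf
  ext i j
  rw [Algebra.leftMulMatrix_eq_repr_mul]
  fin_cases j <;> simp only [Fin.zero_eta, Fin.mk_one, Fin.isValue]
  · rw [e0, sq19_repr B hB]
    fin_cases i <;> simp
  · rw [e1, sq19_repr B hB]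
    fin_cases i <;> simp

lemma sq19_norm {m : ℕ} {θ : F} (hθ : θ^2 = (m:F)) (B : Module.Basis (Fin 2) ℚ F) (hB : ⇑B = ![1, θ])
    (a b : ℚ) :
    Algebra.norm ℚ (a • (1:F) + b • θ) = a^2 - (m:ℚ) * b^2 := by
  rw [Algebra.norm_eq_matrix_det B, sq19_lmm hθ B hB, Matrix.det_fin_two]
  simp
  ring

lemma sq19_trace {m : ℕ} {θ : F} (hθ : θ^2 = (m:F)) (B : Module.Basis (Fin 2) ℚ F) (hB : ⇑B = ![1, θ])
    (a b : ℚ) :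
    Algebra.trace ℚ F (a • (1:F) + b • θ) = 2 * a := by
  rw [Algebra.trace_eq_matrix_trace B, sq19_lmm hθ B hB, Matrix.trace_fin_two]
  simp
  ring

end

section
variable {F : Type*} [Field F] [NumberField F]

lemma sq19_int_coords {m : ℕ} (hsf : Squarefree m) (hm4 : m % 4 = 3) {θ : F}
    (hθ : θ^2 = (m:F)) (B : Module.Basis (Fin 2) ℚ F) (hB : ⇑B = ![1, θ]) {a b : ℚ} {x : F}
    (hx : IsIntegral ℤ x) (hxab : x = a • (1:F) + b • θ) :
    ∃ A C : ℤ, (A:ℚ) = a ∧ (C:ℚ) = b := by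
  have htr : IsIntegral ℤ (Algebra.trace ℚ F x) := Algebra.isIntegral_trace hx
  obtain ⟨T, hT⟩ := IsIntegrallyClosed.isIntegral_iff.mp htr
  have hno : IsIntegral ℤ (Algebra.norm ℚ x) := Algebra.isIntegral_norm ℚ hx
  obtain ⟨N, hN⟩ := IsIntegrallyClosed.isIntegral_iff.mp hno
  rw [hxab, sq19_trace hθ B hB] at hT
  rw [hxab, sq19_norm hθ B hB] at hN
  have hT' : ((T:ℤ):ℚ) = 2 * a := hT
  have hN' : ((N:ℤ):ℚ) = a^2 - (m:ℚ) * b^2 := hN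
  have hmb : (m:ℚ) * (2*b)^2 = ((T^2 - 4*N : ℤ) : ℚ) := by
    have expand : ((T^2 - 4*N : ℤ) : ℚ) = (T:ℚ)^2 - 4*(N:ℚ) := by push_cast; ring
    rw [expand]
    linear_combination (-(T:ℚ) - 2*a) * hT' + 4 * hN'
  obtain ⟨S, hS⟩ := sq19_int_of_mul_sq hsf (2*b) (T^2 - 4*N) hmb
  have hrel : T^2 - (m:ℤ)*S^2 = 4*N := by
    have : ((T^2 - (m:ℤ)*S^2 : ℤ) : ℚ) = ((4*N : ℤ) : ℚ) := by
      have expand : ((T^2 - 4*N : ℤ) : ℚ) = (T:ℚ)^2 - 4*(N:ℚ) := by push_cast; ring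
      rw [expand] at hmb
      push_cast
      linear_combination (-(m:ℚ)*((S:ℚ) + 2*b)) * hS - hmb
    exact_mod_cast this
  obtain ⟨hTe, hSe⟩ := sq19_even_even (T := T) (S := S) (M := (m:ℤ)) (by omega) ⟨N, by linarith [hrel]⟩
  obtain ⟨t, ht⟩ := hTe
  obtain ⟨s, hs⟩ := hSe
  refine ⟨t, s, ?_, ?_⟩
  · have : ((2*t : ℤ):ℚ) = 2*a := by rw [← ht]; exact hT'
    push_cast at this
    linarith
  · have : ((2*s : ℤ):ℚ) = 2*b := by rw [← hs]; exact hS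
    push_cast at this
    linarith

end

/-- Let `ℓ 1 ≡ 3 (mod 8)` and `ℓ 2, …, ℓ n ≡ 5 (mod 8)` (`n ≥ 2`) be distinct primes,
`m = ℓ 1 ⋯ ℓ n`, and let `F = ℚ(√m)` (a number field of degree 2 over `ℚ` containing a
square root `θ` of `m`). Then no prime ideal of the ring of integers of `F` lying above `2`
is principal. -/
theorem stmt19 (n : ℕ) (hn : 2 ≤ n) (ℓ : Fin n → ℕ) (hprime : ∀ i, (ℓ i).Prime)
    (hmod1 : ∀ i : Fin n, (i : ℕ) = 0 → ℓ i % 8 = 3)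
    (hmod5 : ∀ i : Fin n, (i : ℕ) ≠ 0 → ℓ i % 8 = 5)
    (hinj : Function.Injective ℓ)
    (F : Type*) [Field F] [NumberField F]
    (hdim : Module.finrank ℚ F = 2)
    (θ : F) (hθ : θ ^ 2 = ((∏ i, ℓ i : ℕ) : F)) :
    ∀ P : Ideal (NumberField.RingOfIntegers F), P.IsPrime →
      (2 : NumberField.RingOfIntegers F) ∈ P → ¬ P.IsPrincipal := by
  have : NeZero n := ⟨by omega⟩
  have hsf : Squarefree (∏ i, ℓ i) := sq19_squarefree_prod ℓ hprime hinj
  have hm4 : (∏ i, ℓ i) % 4 = 3 := sq19_mod4 hn ℓ hmod1 hmod5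
  have hm1 : 1 < ∏ i, ℓ i := by
    have hpos : 0 < ∏ i, ℓ i := Finset.prod_pos (fun i _ => (hprime i).pos)
    have hdvd : ℓ 0 ∣ ∏ i, ℓ i := Finset.dvd_prod_of_mem ℓ (Finset.mem_univ 0)
    have h0 := hmod1 0 (by simp)
    have h1 := Nat.le_of_dvd hpos hdvd
    omega
  obtain ⟨m, hm⟩ : ∃ m : ℕ, m = ∏ i, ℓ i := ⟨_, rfl⟩
  rw [← hm] at hθ hsf hm4 hm1
  -- basis
  have li : LinearIndependent ℚ ![1, θ] := sq19_li hsf hm1 hθ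
  obtain ⟨B, hB⟩ : ∃ B : Module.Basis (Fin 2) ℚ F, ⇑B = ![1, θ] :=
    ⟨basisOfLinearIndependentOfCardEqFinrank li (by simp [hdim]),
      coe_basisOfLinearIndependentOfCardEqFinrank li _⟩
  -- θ is integral
  have hθint : IsIntegral ℤ θ := by
    refine ⟨Polynomial.X^2 - Polynomial.C (m:ℤ), Polynomial.monic_X_pow_sub_C _ (by norm_num), ?_⟩
    simp [hθ]
  obtain ⟨Θ, hΘ⟩ : ∃ Θ : NumberField.RingOfIntegers F, (Θ : F) = θ := ⟨⟨θ, hθint⟩, rfl⟩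
  intro P hP hP2 hpr
  obtain ⟨α, hspan⟩ := hpr
  have hspan' : P = Ideal.span {α} := hspan
  rw [hspan'] at hP2
  obtain ⟨γ, hγ⟩ := Ideal.mem_span_singleton.mp hP2
  -- coordinates of α
  have hαx : (α : F) = (B.repr (α:F) 0) • (1:F) + (B.repr (α:F) 1) • θ := by
    conv_lhs => rw [← B.sum_repr (α:F)]
    rw [Fin.sum_univ_two, hB]
    simp
  obtain ⟨A, C, hA, hC⟩ := sq19_int_coords hsf hm4 hθ B hB
    (NumberField.RingOfIntegers.isIntegral_coe α) hαx
  have hαx' : (α : F) = ((A:ℚ)) • (1:F) + ((C:ℚ)) • θ := by rw [hαx, hA, hC]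
  obtain ⟨D, hDdef⟩ : ∃ D : ℤ, D = A^2 - (m:ℤ)*C^2 := ⟨_, rfl⟩
  have hnormα : Algebra.norm ℚ (α : F) = (D:ℚ) := by
    rw [hαx', sq19_norm hθ B hB, hDdef]
    push_cast
    ring
  -- norm of γ
  obtain ⟨G, hG⟩ := IsIntegrallyClosed.isIntegral_iff.mp
    (Algebra.isIntegral_norm (R := ℤ) ℚ (NumberField.RingOfIntegers.isIntegral_coe γ))
  have hG' : (G:ℚ) = Algebra.norm ℚ ((γ:F)) := hG
  -- norm of 2 is 4
  have hnorm2 : Algebra.norm ℚ (((2 : NumberField.RingOfIntegers F)) : F) = 4 := by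
    have h2 : (((2 : NumberField.RingOfIntegers F)) : F) = algebraMap ℚ F 2 :=
      (rfl : (((2 : NumberField.RingOfIntegers F)) : F) = (2:F)).trans
        (map_ofNat (algebraMap ℚ F) 2).symm
    rw [h2, Algebra.norm_algebraMap, hdim]
    norm_num
  have hDG : D * G = 4 := by
    have h24 : ((D * G : ℤ) : ℚ) = ((4:ℤ):ℚ) := by
      push_cast
      rw [← hnormα, hG', ← map_mul]
      rw [show ((α : F) * (γ : F)) = ((2 : NumberField.RingOfIntegers F) : F) by
        exact_mod_cast congrArg (algebraMap (NumberField.RingOfIntegers F) F) hγ.symm]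
      rw [hnorm2]
    exact_mod_cast h24
  have hαnu : ¬ IsUnit α := by
    intro hu
    exact hP.ne_top (hspan' ▸ Ideal.span_singleton_eq_top.mpr hu)
  have hDne1 : D.natAbs ≠ 1 := by
    intro h1
    apply hαnu
    rw [NumberField.isUnit_iff_norm]
    have hcn : (RingOfIntegers.norm ℚ α : ℚ) = (D:ℚ) := by
      rw [RingOfIntegers.coe_norm, hnormα]
    rw [hcn]
    rcases Int.natAbs_eq D with h | h <;> rw [h, h1] <;> norm_num
  have hD24 : D.natAbs = 2 ∨ D.natAbs = 4 := by
    have hdvd4 : D.natAbs ∣ 4 := by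
      have hDdvd : D ∣ 4 := ⟨G, hDG.symm⟩
      exact Int.natAbs_dvd_natAbs.mpr (by exact_mod_cast hDdvd)
    have hmem : D.natAbs ∈ Nat.divisors 4 := Nat.mem_divisors.mpr ⟨hdvd4, by norm_num⟩
    have hdiv : Nat.divisors 4 = {1, 2, 4} := by decide
    rw [hdiv] at hmem
    simp only [Finset.mem_insert, Finset.mem_singleton] at hmem
    rcases hmem with h | h | h <;> omega
  rcases hD24 with h2 | h4
  · -- |D| = 2 : quadratic residue contradiction mod ℓ i₁
    obtain ⟨i₁, hi₁⟩ : ∃ i : Fin n, (i:ℕ) = 1 := ⟨⟨1, by omega⟩, rfl⟩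
    have h5 : ℓ i₁ % 8 = 5 := hmod5 i₁ (by omega)
    haveI : Fact (ℓ i₁).Prime := ⟨hprime i₁⟩
    have hdvd : ℓ i₁ ∣ m := hm ▸ Finset.dvd_prod_of_mem ℓ (Finset.mem_univ i₁)
    have hm0 : ((m:ℕ) : ZMod (ℓ i₁)) = 0 := (ZMod.natCast_eq_zero_iff _ _).mpr hdvd
    have hne2 : ℓ i₁ ≠ 2 := by omega
    rcases Int.natAbs_eq D with hsgn | hsgn
    · -- D = 2
      have hcast : ((A:ZMod (ℓ i₁)))^2 = 2 := by
        have hc : ((A^2 - (m:ℤ)*C^2 : ℤ) : ZMod (ℓ i₁)) = ((2:ℤ) : ZMod (ℓ i₁)) := by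
          rw [← hDdef, hsgn, h2]
          norm_num
        push_cast at hc
        rw [hm0] at hc
        linear_combination hc
      have hsq : IsSquare (2 : ZMod (ℓ i₁)) := ⟨(A : ZMod (ℓ i₁)), by rw [← hcast]; ring⟩
      rw [ZMod.exists_sq_eq_two_iff hne2] at hsq
      omega
    · -- D = -2
      have hcast : ((A:ZMod (ℓ i₁)))^2 = -2 := by
        have hc : ((A^2 - (m:ℤ)*C^2 : ℤ) : ZMod (ℓ i₁)) = ((-2:ℤ) : ZMod (ℓ i₁)) := by
          rw [← hDdef, hsgn, h2]
          norm_num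
        push_cast at hc
        rw [hm0] at hc
        linear_combination hc
      have hsq : IsSquare (-2 : ZMod (ℓ i₁)) := ⟨(A : ZMod (ℓ i₁)), by rw [← hcast]; ring⟩
      rw [ZMod.exists_sq_eq_neg_two_iff hne2] at hsq
      omega
  · -- |D| = 4 : P = (2), contradiction with ramification
    have hGu : G.natAbs = 1 := by
      have hn4 := congrArg Int.natAbs hDG
      rw [Int.natAbs_mul, h4] at hn4
      norm_num at hn4
      omega
    have hγu : IsUnit γ := by
      rw [NumberField.isUnit_iff_norm]
      have hcn : (RingOfIntegers.norm ℚ γ : ℚ) = (G:ℚ) := by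
        rw [RingOfIntegers.coe_norm, ← hG']
      rw [hcn]
      rcases Int.natAbs_eq G with h | h <;> rw [h, hGu] <;> norm_num
    have hspan2 : P = Ideal.span {(2 : NumberField.RingOfIntegers F)} := by
      rw [hspan', Ideal.span_singleton_eq_span_singleton]
      exact ⟨hγu.unit, by simp [hγ.symm]⟩
    have hΘ2 : Θ^2 = ((m:ℕ) : NumberField.RingOfIntegers F) := by
      have hΘc : ((Θ^2 : NumberField.RingOfIntegers F) : F)
          = (((m:ℕ) : NumberField.RingOfIntegers F) : F) := by
        push_cast [hΘ]
        exact hθ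
      exact_mod_cast hΘc
    obtain ⟨k, hk⟩ : ∃ k, m = 4*k+3 := ⟨m/4, by omega⟩
    have hmem : (1 + Θ) * (1 - Θ) ∈ P := by
      rw [hspan2, Ideal.mem_span_singleton]
      refine ⟨-(2*(k:NumberField.RingOfIntegers F) + 1), ?_⟩
      have hdiff : (1 + Θ) * (1 - Θ) = 1 - Θ^2 := by ring
      rw [hdiff, hΘ2, hk]
      push_cast
      ring
    rcases hP.mem_or_mem hmem with hmem1 | hmem1 <;>
    · rw [hspan2, Ideal.mem_span_singleton] at hmem1
      obtain ⟨β, hβ⟩ := hmem1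
      have hβx : (β : F) = (B.repr (β:F) 0) • (1:F) + (B.repr (β:F) 1) • θ := by
        conv_lhs => rw [← B.sum_repr (β:F)]
        rw [Fin.sum_univ_two, hB]
        simp
      obtain ⟨c, d, hc, hd⟩ := sq19_int_coords hsf hm4 hθ B hB
        (NumberField.RingOfIntegers.isIntegral_coe β) hβx
      have hβx' : (β : F) = ((c:ℚ)) • (1:F) + ((d:ℚ)) • θ := by rw [hβx, hc, hd]
      have hcast : ((1 + Θ : NumberField.RingOfIntegers F) : F) = 2 * (β : F) ∨
          ((1 - Θ : NumberField.RingOfIntegers F) : F) = 2 * (β : F) := by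
        first
          | exact Or.inl (congrArg (algebraMap (NumberField.RingOfIntegers F) F) hβ)
          | exact Or.inr (congrArg (algebraMap (NumberField.RingOfIntegers F) F) hβ)
      have hFeq : (((1:ℚ)) • (1:F) + ((1:ℚ)) • θ = ((2*(c:ℚ))) • (1:F) + ((2*(d:ℚ))) • θ) ∨
          (((1:ℚ)) • (1:F) + ((-1:ℚ)) • θ = ((2*(c:ℚ))) • (1:F) + ((2*(d:ℚ))) • θ) := by
        rcases hcast with hcc | hcc
        · left
          have hlhs : ((1 + Θ : NumberField.RingOfIntegers F) : F) = 1 + θ := by push_cast [hΘ]; ring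
          rw [hlhs] at hcc
          rw [show ((1:ℚ)) • (1:F) + ((1:ℚ)) • θ = 1 + θ by module, hcc,
            show (2:F) * (β:F) = ((2:ℚ)) • (β:F) by rw [Algebra.smul_def]; norm_num, hβx']
          module
        · right
          have hlhs : ((1 - Θ : NumberField.RingOfIntegers F) : F) = 1 - θ := by push_cast [hΘ]; ring
          rw [hlhs] at hcc
          rw [show ((1:ℚ)) • (1:F) + ((-1:ℚ)) • θ = 1 - θ by module, hcc,
            show (2:F) * (β:F) = ((2:ℚ)) • (β:F) by rw [Algebra.smul_def]; norm_num, hβx']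
          module
      have hone : (1:ℚ) = 2*(c:ℚ) := by
        rcases hFeq with hF1 | hF1
        · have hr := sq19_repr B hB (1:ℚ) (1:ℚ) 0
          rw [hF1, sq19_repr B hB] at hr
          simpa using hr.symm
        · have hr := sq19_repr B hB (1:ℚ) (-1:ℚ) 0
          rw [hF1, sq19_repr B hB] at hr
          simpa using hr.symm
      have hint : (1:ℤ) = 2*c := by exact_mod_cast hone
      omega
end
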